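/- arXiv:1501.03200 — 8 statements merged into one kernel-verified Lean document; each statement's English description precedes it below -/
import Mathlib

section
/- For all real numbers a, b with 0 < a < b, the integral ∫_a^b (w/(1+w))·e^{w/2} dw satisfies (1/12)·e^{b/2}·min(1,b)·min(1,b-a) ≤ ∫_a^b (w/(1+w))·e^{w/2} dw ≤ 2·e^{b/2}·min(1,b)·min(1,b-a). -/
/-!
For `0 ≤ w ≤ b` the factor `w / (1 + w)` is at most `min 1 b`, and at least `min 1 b / 3` once
`b / 2 ≤ w`; on `[b - 1/2, b]` the factor `exp (w / 2)` is at least `3/4 * exp (b / 2)`. For the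
upper bound, integrate `min 1 b * exp (w / 2)` exactly and use `1 - exp (-x) ≤ min 1 x`. For the
lower bound, keep only the last `min 1 (b - a) / 2` of the interval, where the integrand is at
least `min 1 b * exp (b / 2) / 4`.
-/

open Real Set

lemma intervalIntegral.mul_sub_le_integral_of_le {f : ℝ → ℝ} {a b c K : ℝ} (hac : a ≤ c)
    (hcb : c ≤ b) (hf : IntervalIntegrable f MeasureTheory.volume a b)
    (hf_nonneg : ∀ w ∈ Icc a c, 0 ≤ f w) (hK : ∀ w ∈ Icc c b, K ≤ f w) :
    K * (b - c) ≤ ∫ w in a..b, f w := by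
  have hfac : IntervalIntegrable f MeasureTheory.volume a c :=
    hf.mono_set (uIcc_subset_uIcc_left (mem_uIcc_of_le hac hcb))
  have hfcb : IntervalIntegrable f MeasureTheory.volume c b :=
    hf.mono_set (uIcc_subset_uIcc_right (mem_uIcc_of_le hac hcb))
  have hleft : 0 ≤ ∫ w in a..c, f w := intervalIntegral.integral_nonneg hac hf_nonneg
  have hright : K * (b - c) ≤ ∫ w in c..b, f w := by
    simpa [mul_comm] using
      intervalIntegral.integral_mono_on hcb intervalIntegrable_const hfcb hK
  rw [← intervalIntegral.integral_add_adjacent_intervals hfac hfcb]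
  linarith

lemma integral_exp_half (a b : ℝ) :
    ∫ w in a..b, exp (w / 2) = 2 * (exp (b / 2) - exp (a / 2)) := by
  rw [intervalIntegral.integral_comp_div exp two_ne_zero, integral_exp, smul_eq_mul]

lemma one_sub_exp_neg_le_min (x : ℝ) : 1 - exp (-x) ≤ min 1 x :=
  le_min (by linarith [exp_pos (-x)]) (by linarith [add_one_le_exp (-x)])

lemma exp_half_sub_exp_half_le {a b : ℝ} (hab : a ≤ b) :
    exp (b / 2) - exp (a / 2) ≤ exp (b / 2) * min 1 (b - a) := by
  have hsplit : exp (b / 2) - exp (a / 2) = exp (b / 2) * (1 - exp (-((b - a) / 2))) := by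
    rw [mul_sub, mul_one, ← exp_add]
    ring_nf
  rw [hsplit]
  gcongr
  exact (one_sub_exp_neg_le_min _).trans (min_le_min_left 1 (by linarith))

lemma three_quarters_mul_exp_half_le {b w : ℝ} (hw : b - 1 / 2 ≤ w) :
    3 / 4 * exp (b / 2) ≤ exp (w / 2) := by
  have hsplit : exp (w / 2) = exp (b / 2) * exp ((w - b) / 2) := by
    rw [← exp_add]
    ring_nf
  rw [hsplit, mul_comm]
  gcongr
  linarith [add_one_le_exp ((w - b) / 2)]

lemma div_one_add_le_min {b w : ℝ} (hw : 0 ≤ w) (hwb : w ≤ b) : w / (1 + w) ≤ min 1 b := by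
  rw [div_le_iff₀ (by linarith)]
  rcases min_cases 1 b with ⟨h, -⟩ | ⟨h, -⟩ <;> rw [h] <;> nlinarith

lemma min_div_three_le_div_one_add {b w : ℝ} (hb : 0 ≤ b) (hw : b / 2 ≤ w) :
    min 1 b / 3 ≤ w / (1 + w) := by
  rw [div_le_div_iff₀ (by norm_num) (by linarith)]
  rcases min_cases 1 b with ⟨h, hb1⟩ | ⟨h, hb1⟩ <;> rw [h] <;> nlinarith

lemma intervalIntegrable_div_one_add_mul_exp_half {a b : ℝ} (ha : 0 ≤ a) (hab : a ≤ b) :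
    IntervalIntegrable (fun w => w / (1 + w) * exp (w / 2)) MeasureTheory.volume a b := by
  refine ContinuousOn.intervalIntegrable_of_Icc hab (ContinuousOn.mul ?_ (by fun_prop))
  exact continuousOn_id.div (by fun_prop) fun w hw => by linarith [hw.1]

lemma integral_div_one_add_mul_exp_half_le {a b : ℝ} (ha : 0 ≤ a) (hab : a ≤ b) :
    ∫ w in a..b, w / (1 + w) * exp (w / 2) ≤ 2 * exp (b / 2) * min 1 b * min 1 (b - a) := by
  have hpoint : ∀ w ∈ Icc a b, w / (1 + w) * exp (w / 2) ≤ min 1 b * exp (w / 2) :=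
    fun w hw => by gcongr; exact div_one_add_le_min (ha.trans hw.1) hw.2
  calc ∫ w in a..b, w / (1 + w) * exp (w / 2)
      ≤ ∫ w in a..b, min 1 b * exp (w / 2) :=
        intervalIntegral.integral_mono_on hab (intervalIntegrable_div_one_add_mul_exp_half ha hab)
          ((by fun_prop : Continuous fun w => min 1 b * exp (w / 2)).intervalIntegrable a b) hpoint
    _ = min 1 b * (2 * (exp (b / 2) - exp (a / 2))) := by
        rw [intervalIntegral.integral_const_mul, integral_exp_half]
    _ ≤ min 1 b * (2 * (exp (b / 2) * min 1 (b - a))) := by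
        have : 0 ≤ min 1 b := le_min zero_le_one (ha.trans hab)
        gcongr
        exact exp_half_sub_exp_half_le hab
    _ = 2 * exp (b / 2) * min 1 b * min 1 (b - a) := by ring

lemma le_integral_div_one_add_mul_exp_half {a b : ℝ} (ha : 0 ≤ a) (hab : a ≤ b) :
    1 / 12 * exp (b / 2) * min 1 b * min 1 (b - a) ≤
      ∫ w in a..b, w / (1 + w) * exp (w / 2) := by
  set m := min 1 (b - a) / 2 with hm
  have hm_nonneg : 0 ≤ m := by have := le_min zero_le_one (sub_nonneg.2 hab); positivity
  have hm_le : m ≤ (b - a) / 2 := by have := min_le_right 1 (b - a); linarith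
  have hm_le_half : m ≤ 1 / 2 := by have := min_le_left 1 (b - a); linarith
  have hpoint : ∀ w ∈ Icc (b - m) b,
      min 1 b / 3 * (3 / 4 * exp (b / 2)) ≤ w / (1 + w) * exp (w / 2) := by
    intro w hw
    have hw_half : b / 2 ≤ w := by linarith [hw.1]
    have hw_nonneg : 0 ≤ w := by linarith
    exact mul_le_mul (min_div_three_le_div_one_add (ha.trans hab) hw_half)
      (three_quarters_mul_exp_half_le (by linarith [hw.1])) (by positivity) (by positivity)
  have hlower := intervalIntegral.mul_sub_le_integral_of_le (by linarith) (by linarith)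
    (intervalIntegrable_div_one_add_mul_exp_half ha hab)
    (fun w hw => by have : 0 ≤ w := ha.trans hw.1; positivity) hpoint
  calc 1 / 12 * exp (b / 2) * min 1 b * min 1 (b - a)
      ≤ 1 / 8 * (exp (b / 2) * min 1 b * min 1 (b - a)) := by
        have hb : 0 ≤ min 1 b := le_min zero_le_one (ha.trans hab)
        have : 0 ≤ exp (b / 2) * min 1 b * min 1 (b - a) := by positivity
        linarith
    _ = min 1 b / 3 * (3 / 4 * exp (b / 2)) * (b - (b - m)) := by rw [hm]; ring
    _ ≤ _ := hlower

theorem stmt0 (a b : ℝ) (ha : 0 < a) (hab : a < b) :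
    (1/12) * Real.exp (b/2) * min 1 b * min 1 (b - a) ≤
      ∫ w in a..b, (w / (1 + w)) * Real.exp (w/2) ∧
    ∫ w in a..b, (w / (1 + w)) * Real.exp (w/2) ≤
      2 * Real.exp (b/2) * min 1 b * min 1 (b - a) :=
  ⟨le_integral_div_one_add_mul_exp_half ha.le hab.le,
    integral_div_one_add_mul_exp_half_le ha.le hab.le⟩
end

section
/- There exist positive constants c₁, c₂ such that for all a, b, c > 0 with a·c > 1, c₁·(a+b)^{3/2}/(√b·(1+b·c)) ≤ ∫_0^∞ ((a+b+v)^{3/2}/(b+v)^{3/2})·e^{-c·v} dv ≤ c₂·(a+b)^{3/2}/(√b·(1+b·c)). -/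
/-!
Put `J = ∫₀^∞ (b+v)^(-3/2) e^(-cv) dv`. Since
`(a+b)^(3/2) ≤ (a+b+v)^(3/2) ≤ √2 (a^(3/2) + (b+v)^(3/2))`, the integral lies between
`(a+b)^(3/2) J` and `√2 (a^(3/2) J + 1/c)`, and `ac > 1` gives `1/c ≤ (a+b)^(3/2) / (√b (1+bc))`.
So everything reduces to `J ≍ 1/(√b (1+bc))`. From above, drop either the exponential
(`J ≤ 2/√b`) or the shift (`J ≤ b^(-3/2)/c`); from below, restrict to `v ≤ b/(1+bc)`, where
`b+v ≤ 2b` and `cv ≤ 1`.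
-/

open Real MeasureTheory Set
open scoped NNReal

lemma Real.rpow_add_le_mul_rpow_add_rpow {x y p : ℝ} (hx : 0 ≤ x) (hy : 0 ≤ y) (hp : 1 ≤ p) :
    (x + y) ^ p ≤ 2 ^ (p - 1) * (x ^ p + y ^ p) := by
  lift x to ℝ≥0 using hx
  lift y to ℝ≥0 using hy
  exact_mod_cast NNReal.rpow_add_le_mul_rpow_add_rpow x y hp

lemma integral_exp_neg_mul_Ioi {c : ℝ} (hc : 0 < c) : ∫ v in Ioi (0:ℝ), exp (-c * v) = 1 / c := by
  have h := integral_comp_mul_left_Ioi (fun x => exp (-x)) 0 hc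
  simp only [mul_zero, integral_exp_neg_Ioi_zero, smul_eq_mul, mul_one] at h
  simpa [neg_mul, one_div] using h

section Translation
variable {E : Type*} [NormedAddCommGroup E]

lemma integrableOn_Ioi_comp_const_add_iff (f : ℝ → E) (b : ℝ) :
    IntegrableOn (fun v => f (b + v)) (Ioi 0) ↔ IntegrableOn f (Ioi b) := by
  have := (measurePreserving_add_left volume b).integrableOn_comp_preimage
    (measurableEmbedding_addLeft b) (f := f) (s := Ioi b)
  simpa [Function.comp_def] using this

lemma integral_Ioi_comp_const_add [NormedSpace ℝ E] (f : ℝ → E) (b : ℝ) :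
    ∫ v in Ioi 0, f (b + v) = ∫ x in Ioi b, f x := by
  have := (measurePreserving_add_left volume b).setIntegral_preimage_emb
    (measurableEmbedding_addLeft b) f (Ioi b)
  simpa using this

end Translation

lemma integrableOn_Ioi_add_rpow {b p : ℝ} (hb : 0 < b) (hp : p < -1) :
    IntegrableOn (fun v => (b + v) ^ p) (Ioi 0) :=
  (integrableOn_Ioi_comp_const_add_iff (· ^ p) b).2 (integrableOn_Ioi_rpow_of_lt hp hb)

lemma integral_Ioi_add_rpow {b p : ℝ} (hb : 0 < b) (hp : p < -1) :
    ∫ v in Ioi 0, (b + v) ^ p = -b ^ (p + 1) / (p + 1) := by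
  rw [integral_Ioi_comp_const_add (· ^ p) b, integral_Ioi_rpow_of_lt hp hb]

lemma rpow_three_halves {x : ℝ} (hx : 0 ≤ x) : x ^ ((3:ℝ)/2) = x * √x := by
  rw [show (3:ℝ)/2 = 1 + 1/2 by norm_num, rpow_add' hx (by norm_num), rpow_one, sqrt_eq_rpow]

lemma rpow_neg_three_halves {x : ℝ} (hx : 0 ≤ x) : x ^ (-((3:ℝ)/2)) = (x * √x)⁻¹ := by
  rw [rpow_neg hx, rpow_three_halves hx]

section ShiftedKernel
variable {b c p : ℝ}

lemma integrableOn_add_rpow_mul_exp (hb : 0 < b) (hp : p < -1) (hc : 0 ≤ c) :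
    IntegrableOn (fun v => (b + v) ^ p * exp (-c * v)) (Ioi 0) := by
  refine (integrableOn_Ioi_add_rpow hb hp).mono' (by fun_prop) ?_
  filter_upwards [ae_restrict_mem measurableSet_Ioi] with v (hv : 0 < v)
  have hbv : 0 ≤ (b + v) ^ p := rpow_nonneg (by linarith) p
  rw [norm_of_nonneg (by positivity)]
  exact mul_le_of_le_one_right hbv (exp_le_one_iff.2 (by nlinarith))

lemma integral_add_rpow_mul_exp_le (hb : 0 < b) (hc : 0 < c) :
    ∫ v in Ioi 0, (b + v) ^ (-((3:ℝ)/2)) * exp (-c * v) ≤ 4 / (√b * (1 + b * c)) := by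
  have hp : -((3:ℝ)/2) < -1 := by norm_num
  have hint := integrableOn_add_rpow_mul_exp hb hp hc.le
  have hsqrt : 0 < √b := sqrt_pos.2 hb
  have hshift : ∫ v in Ioi 0, (b + v) ^ (-((3:ℝ)/2)) * exp (-c * v) ≤ 2 / √b := by
    calc _ ≤ ∫ v in Ioi 0, (b + v) ^ (-((3:ℝ)/2)) :=
          setIntegral_mono_on hint (integrableOn_Ioi_add_rpow hb hp) measurableSet_Ioi
            fun v (hv : 0 < v) => mul_le_of_le_one_right (rpow_nonneg (by linarith) _)
              (exp_le_one_iff.2 (by nlinarith))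
      _ = 2 / √b := by
        rw [integral_Ioi_add_rpow hb hp, show -((3:ℝ)/2) + 1 = -(1/2) by norm_num,
          rpow_neg hb.le, ← sqrt_eq_rpow]
        field_simp
  have hdecay : ∫ v in Ioi 0, (b + v) ^ (-((3:ℝ)/2)) * exp (-c * v) ≤ (b * √b)⁻¹ / c := by
    calc _ ≤ ∫ v in Ioi 0, b ^ (-((3:ℝ)/2)) * exp (-c * v) :=
          setIntegral_mono_on hint ((exp_neg_integrableOn_Ioi 0 hc).const_mul _) measurableSet_Ioi
            fun v (hv : 0 < v) => mul_le_mul_of_nonneg_right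
              (rpow_le_rpow_of_nonpos hb (by linarith) (by norm_num)) (exp_pos _).le
      _ = (b * √b)⁻¹ / c := by
        rw [integral_const_mul, integral_exp_neg_mul_Ioi hc, rpow_neg_three_halves hb.le]
        ring
  rcases le_total (b * c) 1 with hbc | hbc
  · refine hshift.trans ?_
    rw [div_le_div_iff₀ hsqrt (by positivity)]
    nlinarith
  · refine hdecay.trans ?_
    rw [inv_div_left, ← one_div, div_le_div_iff₀ (by positivity) (by positivity)]
    nlinarith

lemma le_integral_add_rpow_mul_exp (hb : 0 < b) (hc : 0 < c) :
    2 ^ (-((3:ℝ)/2)) * exp (-1) / (√b * (1 + b * c)) ≤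
      ∫ v in Ioi 0, (b + v) ^ (-((3:ℝ)/2)) * exp (-c * v) := by
  have hint := integrableOn_add_rpow_mul_exp hb (by norm_num : -((3:ℝ)/2) < -1) hc.le
  set t := b / (1 + b * c) with ht
  have ht0 : 0 ≤ t := by positivity
  have htb : t ≤ b := div_le_self hb.le (by nlinarith)
  have hct : c * t ≤ 1 := by
    rw [ht, mul_div_assoc', div_le_one (by positivity)]
    nlinarith
  have hpt : ∀ v ∈ Ioc 0 t, (2 * b) ^ (-((3:ℝ)/2)) * exp (-1) ≤
      (b + v) ^ (-((3:ℝ)/2)) * exp (-c * v) := by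
    rintro v ⟨hv0, hvt⟩
    exact mul_le_mul (rpow_le_rpow_of_nonpos (by linarith) (by linarith) (by norm_num))
      (exp_le_exp.2 (by nlinarith)) (exp_pos _).le (rpow_nonneg (by linarith) _)
  calc 2 ^ (-((3:ℝ)/2)) * exp (-1) / (√b * (1 + b * c))
      = (2 * b) ^ (-((3:ℝ)/2)) * exp (-1) * volume.real (Ioc 0 t) := by
        rw [measureReal_def, Real.volume_Ioc, sub_zero, ENNReal.toReal_ofReal ht0,
          mul_rpow (by norm_num) hb.le, rpow_neg_three_halves hb.le, ht]
        have := sqrt_pos.2 hb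
        field_simp
    _ ≤ ∫ v in Ioc 0 t, (b + v) ^ (-((3:ℝ)/2)) * exp (-c * v) :=
        setIntegral_ge_of_const_le_real measurableSet_Ioc measure_Ioc_lt_top.ne hpt
          (hint.mono_set Ioc_subset_Ioi_self)
    _ ≤ ∫ v in Ioi 0, (b + v) ^ (-((3:ℝ)/2)) * exp (-c * v) := by
        refine setIntegral_mono_set hint ?_ Ioc_subset_Ioi_self.eventuallyLE
        filter_upwards [ae_restrict_mem measurableSet_Ioi] with v (hv : 0 < v)
        exact mul_nonneg (rpow_nonneg (by linarith) _) (exp_pos _).le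

end ShiftedKernel

lemma add_rpow_div_rpow_le {x y p : ℝ} (hx : 0 ≤ x) (hy : 0 < y) (hp : 1 ≤ p) :
    (x + y) ^ p / y ^ p ≤ 2 ^ (p - 1) * (x ^ p * y ^ (-p) + 1) := by
  have hyp : 0 < y ^ p := rpow_pos_of_pos hy p
  rw [div_le_iff₀ hyp]
  calc (x + y) ^ p ≤ 2 ^ (p - 1) * (x ^ p + y ^ p) := rpow_add_le_mul_rpow_add_rpow hx hy.le hp
    _ = 2 ^ (p - 1) * (x ^ p * y ^ (-p) + 1) * y ^ p := by
      rw [rpow_neg hy.le]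
      field_simp

section Ratio
variable {a b c p : ℝ}

lemma ratio_mul_exp_le (ha : 0 < a) (hp : 1 ≤ p) {v : ℝ} (hv : 0 < b + v) :
    (a + b + v) ^ p / (b + v) ^ p * exp (-c * v) ≤
      2 ^ (p - 1) * (a ^ p * ((b + v) ^ (-p) * exp (-c * v)) + exp (-c * v)) := by
  calc _ ≤ 2 ^ (p - 1) * (a ^ p * (b + v) ^ (-p) + 1) * exp (-c * v) := by
        rw [add_assoc]
        exact mul_le_mul_of_nonneg_right (add_rpow_div_rpow_le ha.le hv hp) (exp_pos _).le
    _ = _ := by ring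

lemma integrableOn_ratio_mul_exp (ha : 0 < a) (hb : 0 < b) (hc : 0 < c) (hp : 1 < p) :
    IntegrableOn (fun v => (a + b + v) ^ p / (b + v) ^ p * exp (-c * v)) (Ioi 0) := by
  have hmajorant := (((integrableOn_add_rpow_mul_exp hb (neg_lt_neg hp) hc.le).const_mul
    (a ^ p)).add (exp_neg_integrableOn_Ioi 0 hc)).const_mul (2 ^ (p - 1))
  refine hmajorant.mono' (by fun_prop) ?_
  filter_upwards [ae_restrict_mem measurableSet_Ioi] with v (hv : 0 < v)
  rw [norm_of_nonneg (by positivity)]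
  exact ratio_mul_exp_le ha hp.le (by linarith)

lemma mul_integral_add_rpow_mul_exp_le (ha : 0 < a) (hb : 0 < b) (hc : 0 < c) (hp : 1 < p) :
    (a + b) ^ p * ∫ v in Ioi 0, (b + v) ^ (-p) * exp (-c * v) ≤
      ∫ v in Ioi 0, (a + b + v) ^ p / (b + v) ^ p * exp (-c * v) := by
  rw [← integral_const_mul]
  refine setIntegral_mono_on
    ((integrableOn_add_rpow_mul_exp hb (neg_lt_neg hp) hc.le).const_mul _)
    (integrableOn_ratio_mul_exp ha hb hc hp) measurableSet_Ioi fun v (hv : 0 < v) => ?_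
  rw [rpow_neg (by linarith), ← mul_assoc, ← div_eq_mul_inv]
  have hnum : (a + b) ^ p ≤ (a + b + v) ^ p :=
    rpow_le_rpow (by linarith) (by linarith) (by linarith)
  gcongr ?_ / _ * _

lemma integral_ratio_mul_exp_le (ha : 0 < a) (hb : 0 < b) (hc : 0 < c) (hp : 1 < p) :
    ∫ v in Ioi 0, (a + b + v) ^ p / (b + v) ^ p * exp (-c * v) ≤
      2 ^ (p - 1) * (a ^ p * (∫ v in Ioi 0, (b + v) ^ (-p) * exp (-c * v)) + 1 / c) := by
  have hkernel := integrableOn_add_rpow_mul_exp hb (neg_lt_neg hp) hc.le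
  calc _ ≤ ∫ v in Ioi 0, 2 ^ (p - 1) * (a ^ p * ((b + v) ^ (-p) * exp (-c * v)) + exp (-c * v)) :=
        setIntegral_mono_on (integrableOn_ratio_mul_exp ha hb hc hp)
          ((hkernel.const_mul _).add (exp_neg_integrableOn_Ioi 0 hc) |>.const_mul _)
          measurableSet_Ioi fun v (hv : 0 < v) => ratio_mul_exp_le ha hp.le (by linarith)
    _ = _ := by
      rw [integral_const_mul, integral_add (hkernel.const_mul _) (exp_neg_integrableOn_Ioi 0 hc),
        integral_const_mul, integral_exp_neg_mul_Ioi hc]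

end Ratio

lemma one_div_le_rpow_three_halves_div {a b c : ℝ} (ha : 0 < a) (hb : 0 < b) (hc : 0 < c)
    (hac : 1 < a * c) : 1 / c ≤ (a + b) ^ ((3:ℝ)/2) / (√b * (1 + b * c)) := by
  have hsqrt : √b ≤ √(a + b) := sqrt_le_sqrt (by linarith)
  rw [rpow_three_halves (by linarith), div_le_div_iff₀ hc (by positivity)]
  nlinarith [mul_le_mul_of_nonneg_left hsqrt (by positivity : 0 ≤ (a + b) * c),
    mul_le_mul_of_nonneg_right hac.le (sqrt_nonneg b)]

theorem stmt1 :
    ∃ c₁ c₂ : ℝ, 0 < c₁ ∧ 0 < c₂ ∧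
      ∀ a b c : ℝ, 0 < a → 0 < b → 0 < c → 1 < a * c →
        c₁ * ((a + b) ^ ((3:ℝ)/2) / (Real.sqrt b * (1 + b * c))) ≤
          (∫ v in Set.Ioi (0:ℝ), ((a + b + v) ^ ((3:ℝ)/2) / (b + v) ^ ((3:ℝ)/2)) * Real.exp (-c * v)) ∧
        (∫ v in Set.Ioi (0:ℝ), ((a + b + v) ^ ((3:ℝ)/2) / (b + v) ^ ((3:ℝ)/2)) * Real.exp (-c * v)) ≤
          c₂ * ((a + b) ^ ((3:ℝ)/2) / (Real.sqrt b * (1 + b * c))) := by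
  refine ⟨2 ^ (-((3:ℝ)/2)) * exp (-1), 5 * 2 ^ ((1:ℝ)/2), by positivity, by positivity,
    fun a b c ha hb hc hac => ⟨?_, ?_⟩⟩
  · calc _ = (a + b) ^ ((3:ℝ)/2) * (2 ^ (-((3:ℝ)/2)) * exp (-1) / (√b * (1 + b * c))) := by ring
      _ ≤ (a + b) ^ ((3:ℝ)/2) * ∫ v in Ioi 0, (b + v) ^ (-((3:ℝ)/2)) * exp (-c * v) := by
        gcongr
        exact le_integral_add_rpow_mul_exp hb hc
      _ ≤ _ := mul_integral_add_rpow_mul_exp_le ha hb hc (by norm_num)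
  · calc _ ≤ 2 ^ ((3:ℝ)/2 - 1) *
          (a ^ ((3:ℝ)/2) * (∫ v in Ioi 0, (b + v) ^ (-((3:ℝ)/2)) * exp (-c * v)) + 1 / c) :=
        integral_ratio_mul_exp_le ha hb hc (by norm_num)
      _ ≤ 2 ^ ((3:ℝ)/2 - 1) * ((a + b) ^ ((3:ℝ)/2) * (4 / (√b * (1 + b * c))) +
          (a + b) ^ ((3:ℝ)/2) / (√b * (1 + b * c))) := by
        have hJ := (by positivity : (0:ℝ) ≤ _).trans (le_integral_add_rpow_mul_exp hb hc)
        gcongr _ * (?_ * ?_ + ?_)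
        · exact rpow_le_rpow ha.le (by linarith) (by norm_num)
        · exact integral_add_rpow_mul_exp_le hb hc
        · exact one_div_le_rpow_three_halves_div ha hb hc hac
      _ = _ := by norm_num; ring
end

section
/- There exist positive constants c₁, c₂ such that for all real a, b, c with a > b > 0, c > b, and the additional assumption that a < 2 whenever b < 1, one has c₁·(a^{5/2}/(b·(b+1)·c) + 1/(1+c)) ≤ ∫_0^∞ ((w+a)^{5/2}/((w+b)²·(w+c)))·e^{-w} dw ≤ c₂·(a^{5/2}/(b·(b+1)·c) + 1/(1+c)). -/
/-!
Upper bound: `(w + a)^{5/2} ≤ 8 (a^{5/2} + w^{5/2})` splits the integrand into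
`a^{5/2} e^{-w} / (c (w + b)^2)` and `w^{1/2} e^{-w} / (w + c)`. The first integrates to at most
`2 a^{5/2} / (b (b + 1) c)` because `b (b + 1) e^{-w} / (w + b)^2 ≤ b / (w + b)^2 + e^{-w}`; the
second to at most `3 / (1 + c)` because `(1 + c) w^{1/2} / (w + c) ≤ w^{-1/2} + w^{1/2}`, whose
integral against `e^{-w}` is `Γ(1/2) + Γ(3/2)`.

Lower bound: on `(0, min b 1]` the integrand is at least `a^{5/2} / (24 b^2 c)`, and on `(1, 2]`,
where `(w + a)^{5/2} ≥ (w + b)^2`, it is at least `1 / (18 (1 + c))`.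
-/

open Real MeasureTheory Set Filter Topology

theorem rpow_add_le_two_rpow_mul_add {x y p : ℝ} (hx : 0 ≤ x) (hy : 0 ≤ y) (hp : 0 ≤ p) :
    (x + y) ^ p ≤ 2 ^ p * (x ^ p + y ^ p) := by
  have hmax : (x + y) ^ p ≤ (2 * max x y) ^ p :=
    rpow_le_rpow (by positivity) (by linarith [le_max_left x y, le_max_right x y]) hp
  rw [mul_rpow zero_le_two (le_max_of_le_left hx)] at hmax
  refine hmax.trans (mul_le_mul_of_nonneg_left ?_ (by positivity))
  rcases le_total x y with h | h
  · rw [max_eq_right h]; linarith [rpow_nonneg hx p]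
  · rw [max_eq_left h]; linarith [rpow_nonneg hy p]

theorem mul_le_setIntegral_of_le_on_Ioc {f : ℝ → ℝ} {S : Set ℝ} {s t C : ℝ} (hst : s ≤ t)
    (hS : MeasurableSet S) (hsub : Ioc s t ⊆ S) (hf : IntegrableOn f S)
    (hf0 : ∀ x ∈ S, 0 ≤ f x) (hC : ∀ x ∈ Ioc s t, C ≤ f x) :
    C * (t - s) ≤ ∫ x in S, f x := by
  have hIoc := setIntegral_ge_of_const_le_real measurableSet_Ioc measure_Ioc_lt_top.ne hC
    (hf.mono_set hsub)
  rw [Measure.real, Real.volume_Ioc, ENNReal.toReal_ofReal (sub_nonneg.2 hst)] at hIoc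
  exact hIoc.trans (setIntegral_mono_set hf ((ae_restrict_iff' hS).2 (ae_of_all _ hf0))
    hsub.eventuallyLE)

theorem hasDerivAt_neg_inv_add {b x : ℝ} (hx : x + b ≠ 0) :
    HasDerivAt (fun w : ℝ => -(w + b)⁻¹) ((x + b) ^ 2)⁻¹ x := by
  refine (((hasDerivAt_id' x).add_const b).inv hx).neg.congr_deriv ?_
  ring

theorem tendsto_neg_inv_add_atTop (b : ℝ) :
    Tendsto (fun w : ℝ => -(w + b)⁻¹) atTop (𝓝 0) := by
  simpa using (tendsto_inv_atTop_zero.comp (tendsto_atTop_add_const_right _ b tendsto_id)).neg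

theorem hasDerivAt_neg_inv_add_of_nonneg {b : ℝ} (hb : 0 < b) :
    ∀ x ∈ Ici (0:ℝ), HasDerivAt (fun w : ℝ => -(w + b)⁻¹) ((x + b) ^ 2)⁻¹ x :=
  fun x hx => hasDerivAt_neg_inv_add (by have : (0:ℝ) ≤ x := hx; positivity)

theorem integrableOn_inv_add_sq {b : ℝ} (hb : 0 < b) :
    IntegrableOn (fun w : ℝ => ((w + b) ^ 2)⁻¹) (Ioi 0) :=
  integrableOn_Ioi_deriv_of_nonneg' (hasDerivAt_neg_inv_add_of_nonneg hb)
    (fun _ _ => by positivity) (tendsto_neg_inv_add_atTop b)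

theorem integral_inv_add_sq {b : ℝ} (hb : 0 < b) :
    ∫ w in Ioi (0:ℝ), ((w + b) ^ 2)⁻¹ = b⁻¹ := by
  simpa using integral_Ioi_of_hasDerivAt_of_nonneg' (hasDerivAt_neg_inv_add_of_nonneg hb)
    (fun _ _ => by positivity) (tendsto_neg_inv_add_atTop b)

theorem IntegrableOn.of_nonneg_of_le {f g : ℝ → ℝ} {S : Set ℝ} (hS : MeasurableSet S)
    (hg : IntegrableOn g S) (hf : AEStronglyMeasurable f (volume.restrict S))
    (hf0 : ∀ x ∈ S, 0 ≤ f x) (hfg : ∀ x ∈ S, f x ≤ g x) : IntegrableOn f S :=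
  hg.mono_nonneg hf ((ae_restrict_iff' hS).2 (ae_of_all _ hf0))
    ((ae_restrict_iff' hS).2 (ae_of_all _ hfg))

theorem exp_neg_div_add_sq_le {b w : ℝ} (hb : 0 < b) (hw : 0 ≤ w) :
    exp (-w) / (w + b) ^ 2 ≤ (b * (b + 1))⁻¹ * (b * ((w + b) ^ 2)⁻¹ + exp (-w)) := by
  have hexp : exp (-w) ≤ 1 := exp_le_one_iff.2 (by linarith)
  have hsq : b ^ 2 ≤ (w + b) ^ 2 := by nlinarith
  rw [div_eq_mul_inv, ← div_eq_inv_mul, le_div_iff₀ (by positivity)]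
  field_simp
  nlinarith [exp_pos (-w), mul_le_mul_of_nonneg_left hsq (exp_pos (-w)).le]

theorem integrableOn_exp_neg_div_add_sq {b : ℝ} (hb : 0 < b) :
    IntegrableOn (fun w : ℝ => exp (-w) / (w + b) ^ 2) (Ioi 0) := by
  refine IntegrableOn.of_nonneg_of_le measurableSet_Ioi
    ((((integrableOn_inv_add_sq hb).const_mul b).add (integrableOn_exp_neg_Ioi 0)).const_mul
      (b * (b + 1))⁻¹)
    (by fun_prop : Measurable _).aestronglyMeasurable (fun _ _ => by positivity)
    (fun w hw => exp_neg_div_add_sq_le hb (le_of_lt hw))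

theorem integral_exp_neg_div_add_sq_le {b : ℝ} (hb : 0 < b) :
    ∫ w in Ioi (0:ℝ), exp (-w) / (w + b) ^ 2 ≤ 2 / (b * (b + 1)) := by
  have hsum := ((integrableOn_inv_add_sq hb).const_mul b).add (integrableOn_exp_neg_Ioi 0)
  calc ∫ w in Ioi (0:ℝ), exp (-w) / (w + b) ^ 2
      ≤ ∫ w in Ioi (0:ℝ), (b * (b + 1))⁻¹ * (b * ((w + b) ^ 2)⁻¹ + exp (-w)) :=
        setIntegral_mono_on (integrableOn_exp_neg_div_add_sq hb) (hsum.const_mul _)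
          measurableSet_Ioi (fun w hw => exp_neg_div_add_sq_le hb (le_of_lt hw))
    _ = 2 / (b * (b + 1)) := by
        rw [integral_const_mul, integral_add ((integrableOn_inv_add_sq hb).const_mul b)
          (integrableOn_exp_neg_Ioi 0),
          integral_const_mul, integral_inv_add_sq hb, integral_exp_neg_Ioi_zero]
        field_simp
        ring

theorem Gamma_one_half_add_Gamma_three_halves_le : Gamma (1 / 2) + Gamma (3 / 2) ≤ 3 := by
  have hsqrt : √π ≤ 2 := by
    rw [show (2:ℝ) = √(2 ^ 2) from (sqrt_sq zero_le_two).symm]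
    exact sqrt_le_sqrt (by linarith [pi_le_four])
  rw [show (3 / 2 : ℝ) = 1 / 2 + 1 by norm_num, Gamma_add_one (by norm_num), Gamma_one_half_eq]
  linarith

theorem exp_neg_mul_sqrt_div_add_le {c w : ℝ} (hc : 0 ≤ c) (hw : 0 < w) :
    exp (-w) * w ^ (1 / 2 : ℝ) / (w + c) ≤
      (1 + c)⁻¹ * (exp (-w) * w ^ ((1 / 2 : ℝ) - 1) + exp (-w) * w ^ ((3 / 2 : ℝ) - 1)) := by
  rw [rpow_sub_one hw.ne', show (3 / 2 : ℝ) - 1 = 1 / 2 by norm_num]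
  have hs : 0 ≤ exp (-w) * w ^ (1 / 2 : ℝ) := by positivity
  rw [div_le_iff₀ (by positivity)]
  field_simp
  nlinarith [mul_nonneg hs (add_nonneg hc (sq_nonneg w))]

theorem integrableOn_exp_neg_mul_sqrt_div_add {c : ℝ} (hc : 0 ≤ c) :
    IntegrableOn (fun w : ℝ => exp (-w) * w ^ (1 / 2 : ℝ) / (w + c)) (Ioi 0) :=
  IntegrableOn.of_nonneg_of_le measurableSet_Ioi
    (((GammaIntegral_convergent (by norm_num)).add
      (GammaIntegral_convergent (by norm_num))).const_mul (1 + c)⁻¹)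
    (by fun_prop : Measurable _).aestronglyMeasurable
    (fun w hw => by have : (0:ℝ) < w := hw; positivity)
    (fun w hw => exp_neg_mul_sqrt_div_add_le hc hw)

theorem integral_exp_neg_mul_sqrt_div_add_le {c : ℝ} (hc : 0 ≤ c) :
    ∫ w in Ioi (0:ℝ), exp (-w) * w ^ (1 / 2 : ℝ) / (w + c) ≤ 3 / (1 + c) := by
  have h₁ := GammaIntegral_convergent (show (0:ℝ) < 1 / 2 by norm_num)
  have h₃ := GammaIntegral_convergent (show (0:ℝ) < 3 / 2 by norm_num)
  calc ∫ w in Ioi (0:ℝ), exp (-w) * w ^ (1 / 2 : ℝ) / (w + c)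
      ≤ ∫ w in Ioi (0:ℝ), (1 + c)⁻¹ *
          (exp (-w) * w ^ ((1 / 2 : ℝ) - 1) + exp (-w) * w ^ ((3 / 2 : ℝ) - 1)) :=
        setIntegral_mono_on (integrableOn_exp_neg_mul_sqrt_div_add hc)
          ((h₁.add h₃).const_mul _) measurableSet_Ioi
          (fun w hw => exp_neg_mul_sqrt_div_add_le hc hw)
    _ = (1 + c)⁻¹ * (Gamma (1 / 2) + Gamma (3 / 2)) := by
        rw [integral_const_mul, integral_add h₁ h₃, Gamma_eq_integral (by norm_num),
          Gamma_eq_integral (by norm_num)]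
    _ ≤ 3 / (1 + c) := by
        rw [inv_mul_eq_div]
        gcongr
        exact Gamma_one_half_add_Gamma_three_halves_le

noncomputable def integrand (a b c w : ℝ) : ℝ :=
  ((w + a) ^ ((5:ℝ)/2) / ((w + b) ^ 2 * (w + c))) * exp (-w)

theorem integrand_nonneg {a b c w : ℝ} (ha : 0 ≤ a) (hc : 0 ≤ c) (hw : 0 ≤ w) :
    0 ≤ integrand a b c w := by
  unfold integrand
  positivity

theorem integrand_le {a b c w : ℝ} (ha : 0 ≤ a) (hb : 0 < b) (hc : 0 < c) (hw : 0 < w) :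
    integrand a b c w ≤
      8 * (a ^ ((5:ℝ)/2) / c * (exp (-w) / (w + b) ^ 2) +
        exp (-w) * w ^ (1 / 2 : ℝ) / (w + c)) := by
  have hsplit : (w + a) ^ ((5:ℝ)/2) ≤ 8 * (a ^ ((5:ℝ)/2) + w ^ ((5:ℝ)/2)) := by
    have h8 : (2:ℝ) ^ ((5:ℝ)/2) ≤ 8 := by
      calc (2:ℝ) ^ ((5:ℝ)/2) ≤ 2 ^ (3:ℝ) := rpow_le_rpow_of_exponent_le one_le_two (by norm_num)
        _ = 8 := by norm_num
    calc (w + a) ^ ((5:ℝ)/2) ≤ 2 ^ ((5:ℝ)/2) * (w ^ ((5:ℝ)/2) + a ^ ((5:ℝ)/2)) :=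
          rpow_add_le_two_rpow_mul_add hw.le ha (by norm_num)
      _ ≤ 8 * (a ^ ((5:ℝ)/2) + w ^ ((5:ℝ)/2)) := by
          rw [add_comm (w ^ _)]; gcongr
  have hw52 : w ^ ((5:ℝ)/2) = w ^ 2 * w ^ (1 / 2 : ℝ) := by
    rw [← rpow_natCast, ← rpow_add hw]; norm_num
  calc integrand a b c w = (w + a) ^ ((5:ℝ)/2) * (exp (-w) / ((w + b) ^ 2 * (w + c))) := by
        unfold integrand; ring
    _ ≤ 8 * (a ^ ((5:ℝ)/2) + w ^ ((5:ℝ)/2)) * (exp (-w) / ((w + b) ^ 2 * (w + c))) := by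
        gcongr
    _ = 8 * (a ^ ((5:ℝ)/2) * exp (-w) / ((w + b) ^ 2 * (w + c)) +
          exp (-w) * w ^ (1 / 2 : ℝ) * w ^ 2 / ((w + b) ^ 2 * (w + c))) := by
        rw [hw52]; ring
    _ ≤ 8 * (a ^ ((5:ℝ)/2) * exp (-w) / ((w + b) ^ 2 * c) +
          exp (-w) * w ^ (1 / 2 : ℝ) * (w + b) ^ 2 / ((w + b) ^ 2 * (w + c))) := by
        gcongr <;> linarith
    _ = _ := by
        field_simp

theorem integrableOn_integrand {a b c : ℝ} (ha : 0 ≤ a) (hb : 0 < b) (hc : 0 < c) :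
    IntegrableOn (integrand a b c) (Ioi 0) :=
  IntegrableOn.of_nonneg_of_le measurableSet_Ioi
    ((((integrableOn_exp_neg_div_add_sq hb).const_mul _).add
      (integrableOn_exp_neg_mul_sqrt_div_add hc.le)).const_mul 8)
    (by unfold integrand; fun_prop : Measurable _).aestronglyMeasurable
    (fun w hw => integrand_nonneg ha hc.le (le_of_lt hw))
    (fun w hw => integrand_le ha hb hc hw)

theorem integral_integrand_le {a b c : ℝ} (ha : 0 ≤ a) (hb : 0 < b) (hc : 0 < c) :
    ∫ w in Ioi (0:ℝ), integrand a b c w ≤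
      24 * (a ^ ((5:ℝ)/2) / (b * (b + 1) * c) + 1 / (1 + c)) := by
  have h₁ := integrableOn_exp_neg_div_add_sq hb
  have h₂ := integrableOn_exp_neg_mul_sqrt_div_add hc.le
  calc ∫ w in Ioi (0:ℝ), integrand a b c w
      ≤ ∫ w in Ioi (0:ℝ), 8 * (a ^ ((5:ℝ)/2) / c * (exp (-w) / (w + b) ^ 2) +
          exp (-w) * w ^ (1 / 2 : ℝ) / (w + c)) :=
        setIntegral_mono_on (integrableOn_integrand ha hb hc)
          (by exact ((h₁.const_mul _).add h₂).const_mul 8) measurableSet_Ioi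
          (fun w hw => integrand_le ha hb hc hw)
    _ = 8 * (a ^ ((5:ℝ)/2) / c * ∫ w in Ioi (0:ℝ), exp (-w) / (w + b) ^ 2) +
          8 * ∫ w in Ioi (0:ℝ), exp (-w) * w ^ (1 / 2 : ℝ) / (w + c) := by
        rw [integral_const_mul, integral_add (h₁.const_mul _) h₂, integral_const_mul]; ring
    _ ≤ 8 * (a ^ ((5:ℝ)/2) / c * (2 / (b * (b + 1)))) + 8 * (3 / (1 + c)) := by
        gcongr
        · exact integral_exp_neg_div_add_sq_le hb
        · exact integral_exp_neg_mul_sqrt_div_add_le hc.le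
    _ ≤ 24 * (a ^ ((5:ℝ)/2) / (b * (b + 1) * c) + 1 / (1 + c)) := by
        have : a ^ ((5:ℝ)/2) / c * (2 / (b * (b + 1))) =
            2 * (a ^ ((5:ℝ)/2) / (b * (b + 1) * c)) := by
          field_simp
        rw [this, show (3:ℝ) / (1 + c) = 3 * (1 / (1 + c)) by ring]
        have : 0 ≤ a ^ ((5:ℝ)/2) / (b * (b + 1) * c) := by positivity
        linarith

theorem inv_three_le_exp_neg_one : 1 / 3 ≤ exp (-1) := by
  rw [exp_neg, one_div]
  exact inv_anti₀ (exp_pos 1) exp_one_lt_three.le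

theorem le_integrand_of_mem_Ioc_min {a b c w : ℝ} (ha : 0 ≤ a) (hb : 0 < b) (hbc : b ≤ c)
    (hw : w ∈ Ioc 0 (min b 1)) :
    a ^ ((5:ℝ)/2) * exp (-1) / (8 * b ^ 2 * c) ≤ integrand a b c w := by
  obtain ⟨hw0, hwm⟩ := hw
  have hc : 0 < c := hb.trans_le hbc
  have hwb : w ≤ b := hwm.trans (min_le_left _ _)
  have hw1 : w ≤ 1 := hwm.trans (min_le_right _ _)
  have hden : (w + b) ^ 2 * (w + c) ≤ 8 * b ^ 2 * c := by
    calc (w + b) ^ 2 * (w + c) ≤ (2 * b) ^ 2 * (2 * c) := by gcongr <;> linarith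
      _ = 8 * b ^ 2 * c := by ring
  rw [integrand, div_mul_eq_mul_div]
  apply div_le_div₀ (by positivity) _ (by positivity) hden
  gcongr
  linarith

theorem le_integrand_of_mem_Ioc_one_two {a b c w : ℝ} (hb : 0 ≤ b) (hba : b ≤ a) (hc : 0 ≤ c)
    (hw : w ∈ Ioc 1 2) :
    exp (-2) / (2 * (1 + c)) ≤ integrand a b c w := by
  obtain ⟨hw1, hw2⟩ := hw
  have hnum : (w + b) ^ 2 ≤ (w + a) ^ ((5:ℝ)/2) := by
    calc (w + b) ^ 2 ≤ (w + a) ^ 2 := by gcongr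
      _ = (w + a) ^ (2:ℝ) := (rpow_natCast _ 2).symm
      _ ≤ (w + a) ^ ((5:ℝ)/2) := rpow_le_rpow_of_exponent_le (by linarith) (by norm_num)
  calc exp (-2) / (2 * (1 + c)) ≤ exp (-w) / (w + c) := by
        gcongr
        linarith
    _ = (w + b) ^ 2 / ((w + b) ^ 2 * (w + c)) * exp (-w) := by
        field_simp
    _ ≤ integrand a b c w := by
        unfold integrand; gcongr

theorem le_integral_integrand_left {a b c : ℝ} (ha : 0 ≤ a) (hb : 0 < b) (hbc : b ≤ c) :
    a ^ ((5:ℝ)/2) / (b * (b + 1) * c) / 24 ≤ ∫ w in Ioi (0:ℝ), integrand a b c w := by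
  have hc : 0 < c := hb.trans_le hbc
  have hm : 0 < min b 1 := lt_min hb one_pos
  have hlow := mul_le_setIntegral_of_le_on_Ioc hm.le measurableSet_Ioi Ioc_subset_Ioi_self
    (integrableOn_integrand ha hb hc) (fun w hw => integrand_nonneg ha hc.le (le_of_lt hw))
    (fun w hw => le_integrand_of_mem_Ioc_min ha hb hbc hw)
  refine le_trans ?_ hlow
  have hmin : b ^ 2 ≤ min b 1 * (b * (b + 1)) := by
    rcases min_cases b 1 with ⟨h, _⟩ | ⟨h, _⟩ <;> rw [h] <;> nlinarith
  have he := inv_three_le_exp_neg_one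
  rw [sub_zero, div_div, div_mul_eq_mul_div, div_le_div_iff₀ (by positivity) (by positivity)]
  have hA : 0 ≤ a ^ ((5:ℝ)/2) := by positivity
  nlinarith [mul_le_mul he hmin (by positivity) (exp_pos _).le,
    mul_nonneg hA (mul_nonneg hc.le hc.le)]

theorem le_integral_integrand_right {a b c : ℝ} (ha : 0 ≤ a) (hb : 0 < b) (hba : b ≤ a)
    (hc : 0 < c) :
    1 / (1 + c) / 18 ≤ ∫ w in Ioi (0:ℝ), integrand a b c w := by
  have hlow := mul_le_setIntegral_of_le_on_Ioc one_le_two measurableSet_Ioi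
    (Ioc_subset_Ioi_self.trans (Ioi_subset_Ioi zero_le_one))
    (integrableOn_integrand ha hb hc) (fun w hw => integrand_nonneg ha hc.le (le_of_lt hw))
    (fun w hw => le_integrand_of_mem_Ioc_one_two hb.le hba hc.le hw)
  refine le_trans ?_ hlow
  have he : 1 / 9 ≤ exp (-2) := by
    rw [show (-2:ℝ) = -1 + -1 by norm_num, exp_add]
    nlinarith [inv_three_le_exp_neg_one]
  rw [show (2:ℝ) - 1 = 1 by norm_num, mul_one, div_div,
    div_le_div_iff₀ (by positivity) (by positivity)]
  nlinarith

theorem le_integral_integrand {a b c : ℝ} (hb : 0 < b) (hba : b ≤ a) (hbc : b ≤ c) :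
    1 / 48 * (a ^ ((5:ℝ)/2) / (b * (b + 1) * c) + 1 / (1 + c)) ≤
      ∫ w in Ioi (0:ℝ), integrand a b c w := by
  have ha : 0 ≤ a := hb.le.trans hba
  have hA : 0 ≤ a ^ ((5:ℝ)/2) / (b * (b + 1) * c) := by
    have := hb.trans_le hbc; positivity
  linarith [le_integral_integrand_left ha hb hbc,
    le_integral_integrand_right ha hb hba (hb.trans_le hbc)]

theorem stmt2 :
    ∃ c₁ c₂ : ℝ, 0 < c₁ ∧ 0 < c₂ ∧
      ∀ a b c : ℝ, 0 < b → b < a → b < c → (b < 1 → a < 2) →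
        c₁ * (a ^ ((5:ℝ)/2) / (b * (b + 1) * c) + 1 / (1 + c)) ≤
          (∫ w in Set.Ioi (0:ℝ), ((w + a) ^ ((5:ℝ)/2) / ((w + b) ^ 2 * (w + c))) * Real.exp (-w)) ∧
        (∫ w in Set.Ioi (0:ℝ), ((w + a) ^ ((5:ℝ)/2) / ((w + b) ^ 2 * (w + c))) * Real.exp (-w)) ≤
          c₂ * (a ^ ((5:ℝ)/2) / (b * (b + 1) * c) + 1 / (1 + c)) := by
  exact ⟨1 / 48, 24, by norm_num, by norm_num, fun a b c hb hba hbc _ =>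
    ⟨le_integral_integrand hb hba.le hbc.le,
      integral_integrand_le (hb.trans hba).le hb (hb.trans hbc)⟩⟩
end

section
/- For every K ≥ 1 there exist positive constants c₁, c₂ such that for all a > b > c > 0 satisfying a ≤ K·b whenever a ≥ 1, one has c₁·(min(1,a) + b^{3/2}/√(c·(1+c))) ≤ ∫_0^a ((w+b)^{3/2}/(√w·(w+c)))·e^{-w} dw ≤ c₂·(min(1,a) + b^{3/2}/√(c·(1+c))). -/
/-!
Write the integrand as `(w + b) ^ (3/2) * sqrtWeight c w`, where
`sqrtWeight c w = e^{-w} / (√w (w + c))`. Since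
`max (w, b) ^ (3/2) ≤ (w + b) ^ (3/2) ≤ 3/2 (w ^ (3/2) + b ^ (3/2))`, the integral is comparable
to `A + b ^ (3/2) B`, with `A = ∫₀ᵃ w / (w + c) e^{-w} dw` and `B = ∫₀ᵃ sqrtWeight c`.

`A ≤ min 1 a` always, and `A ≥ a / 18` when `a ≤ 1`: on `[a/2, a]` the factor `w / (w + c)`
is at least `1/3` because `c < a`. `B` is comparable to `1 / √(c (1 + c))`: up to `min c 1` the
weight is of size `1 / (c √w)`, and beyond it is dominated by `w ^ (-3/2)` if `c ≤ 1` and by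
`e^{-w} / c` if `c > 1`. Finally, for `a ≥ 1` the term `min 1 a = 1` is absorbed by
`b ^ (3/2) / √(c (1 + c)) ≥ 1 / (2K)`, which is where `a ≤ K b` enters.
-/

open Real MeasureTheory intervalIntegral Set

noncomputable def sqrtWeight (c w : ℝ) : ℝ := exp (-w) / (√w * (w + c))

section
variable {a b c w x y K : ℝ}

lemma sqrtWeight_nonneg (hc : 0 < c) (hw : 0 ≤ w) : 0 ≤ sqrtWeight c w := by
  unfold sqrtWeight; positivity

lemma sqrtWeight_le_inv_sqrt_div (hc : 0 < c) (hw : 0 ≤ w) :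
    sqrtWeight c w ≤ (√w)⁻¹ / c := by
  unfold sqrtWeight
  rcases hw.eq_or_lt with rfl | hw
  · simp
  have hs := sqrt_pos.mpr hw
  have he : exp (-w) ≤ 1 := exp_le_one_iff.mpr (neg_nonpos.mpr hw.le)
  rw [div_le_div_iff₀ (by positivity) hc, inv_mul_eq_div, le_div_iff₀ hs]
  nlinarith [mul_le_mul_of_nonneg_right he (mul_pos hc hs).le, mul_pos hs hw]

lemma rpow_three_halves_eq (hw : 0 ≤ w) : w ^ (3 / 2 : ℝ) = w * √w := by
  rw [show (3 / 2 : ℝ) = 1 + 1 / 2 by norm_num, rpow_add' hw (by norm_num), rpow_one,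
    sqrt_eq_rpow]

lemma sqrtWeight_le_rpow (hc : 0 < c) (hw : 0 < w) : sqrtWeight c w ≤ w ^ (-(3 / 2) : ℝ) := by
  unfold sqrtWeight
  rw [rpow_neg hw.le, rpow_three_halves_eq hw.le, div_le_iff₀ (by positivity), inv_mul_eq_div,
    le_div_iff₀ (by positivity)]
  have hs := sqrt_pos.mpr hw
  have he : exp (-w) ≤ 1 := exp_le_one_iff.mpr (neg_nonpos.mpr hw.le)
  nlinarith [mul_le_mul_of_nonneg_right he (mul_pos hw hs).le, mul_pos hs hc]

lemma sqrtWeight_le_exp_div (hc : 0 < c) (hw : 1 ≤ w) : sqrtWeight c w ≤ exp (-w) / c := by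
  have hsw : 1 ≤ √w := one_le_sqrt.mpr hw
  unfold sqrtWeight
  gcongr
  nlinarith

lemma one_third_le_exp_neg (hw : w ≤ 1) : 1 / 3 ≤ exp (-w) :=
  (by norm_num : (1 / 3 : ℝ) ≤ 0.36787944116).trans
    (exp_neg_one_gt_d9.le.trans (exp_le_exp.mpr (by linarith)))

lemma inv_sqrt_div_le_sqrtWeight (hc : 0 < c) (hw : 0 < w) (hw1 : w ≤ 1) (hwc : w ≤ c) :
    (√w)⁻¹ / (6 * c) ≤ sqrtWeight c w := by
  have hexp := one_third_le_exp_neg hw1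
  unfold sqrtWeight
  rw [div_le_div_iff₀ (by positivity) (by positivity), inv_mul_eq_div,
    div_le_iff₀ (sqrt_pos.mpr hw)]
  have hs := sqrt_pos.mpr hw
  nlinarith [mul_le_mul_of_nonneg_right hexp (mul_pos hc hs).le,
    mul_le_mul_of_nonneg_left hwc hs.le]

lemma inv_sqrt_eq_rpow (hw : 0 ≤ w) : (√w)⁻¹ = w ^ (-(1 / 2) : ℝ) := by
  rw [rpow_neg hw, sqrt_eq_rpow]

lemma intervalIntegrable_inv_sqrt (hx : 0 ≤ x) :
    IntervalIntegrable (fun w => (√w)⁻¹) volume 0 x := by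
  refine (intervalIntegrable_rpow' (r := -(1 / 2)) (by norm_num)).congr ?_
  intro w hw
  rw [uIoc_of_le hx] at hw
  exact (inv_sqrt_eq_rpow hw.1.le).symm

lemma integral_inv_sqrt (hx : 0 ≤ x) : ∫ w in (0 : ℝ)..x, (√w)⁻¹ = 2 * √x := by
  rw [integral_congr fun w (hw : w ∈ uIcc 0 x) => inv_sqrt_eq_rpow (uIcc_of_le hx ▸ hw).1,
    integral_rpow (Or.inl (by norm_num)), sqrt_eq_rpow]
  norm_num
  ring

lemma intervalIntegrable_sqrtWeight (hc : 0 < c) (hx : 0 ≤ x) (hy : 0 ≤ y) :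
    IntervalIntegrable (sqrtWeight c) volume x y := by
  have from_zero {a : ℝ} (ha : 0 ≤ a) : IntervalIntegrable (sqrtWeight c) volume 0 a := by
    refine ((intervalIntegrable_inv_sqrt ha).div_const c).mono_fun
      (by unfold sqrtWeight; fun_prop : Measurable (sqrtWeight c)).aestronglyMeasurable ?_
    refine ae_restrict_of_forall_mem measurableSet_uIoc fun w hw => ?_
    rw [uIoc_of_le ha] at hw
    dsimp only
    rw [norm_of_nonneg (sqrtWeight_nonneg hc hw.1.le), norm_of_nonneg (by positivity)]
    exact sqrtWeight_le_inv_sqrt_div hc hw.1.le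
  exact (from_zero hx).symm.trans (from_zero hy)

lemma integral_sqrtWeight_le_sqrt (hc : 0 < c) (hx : 0 ≤ x) :
    ∫ w in (0 : ℝ)..x, sqrtWeight c w ≤ 2 * √x / c := by
  rw [← integral_inv_sqrt hx, ← intervalIntegral.integral_div]
  exact integral_mono_on hx (intervalIntegrable_sqrtWeight hc le_rfl hx)
    ((intervalIntegrable_inv_sqrt hx).div_const c)
    fun w hw => sqrtWeight_le_inv_sqrt_div hc hw.1

lemma sqrt_div_le_integral_sqrtWeight (hc : 0 < c) (hx : 0 ≤ x) (hx1 : x ≤ 1) (hxc : x ≤ c) :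
    √x / (3 * c) ≤ ∫ w in (0 : ℝ)..x, sqrtWeight c w := by
  calc √x / (3 * c) = ∫ w in (0 : ℝ)..x, (√w)⁻¹ / (6 * c) := by
        rw [intervalIntegral.integral_div, integral_inv_sqrt hx]; ring
    _ ≤ _ := integral_mono_on_of_le_Ioo hx ((intervalIntegrable_inv_sqrt hx).div_const _)
        (intervalIntegrable_sqrtWeight hc le_rfl hx)
        fun w hw => inv_sqrt_div_le_sqrtWeight hc hw.1 (by linarith [hw.2]) (by linarith [hw.2])

lemma integral_sqrtWeight_tail_le_inv_sqrt (hc : 0 < c) (hca : c ≤ a) :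
    ∫ w in c..a, sqrtWeight c w ≤ 2 / √c := by
  have hrpow : IntervalIntegrable (fun w => w ^ (-(3 / 2) : ℝ)) volume c a :=
    intervalIntegral.intervalIntegrable_rpow (Or.inr (notMem_uIcc_of_lt hc (hc.trans_le hca)))
  calc ∫ w in c..a, sqrtWeight c w ≤ ∫ w in c..a, w ^ (-(3 / 2) : ℝ) :=
        integral_mono_on hca (intervalIntegrable_sqrtWeight hc hc.le (hc.le.trans hca)) hrpow
          fun w hw => sqrtWeight_le_rpow hc (hc.trans_le hw.1)
    _ = 2 * ((√c)⁻¹ - (√a)⁻¹) := by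
        rw [integral_rpow (Or.inr ⟨by norm_num, notMem_uIcc_of_lt hc (hc.trans_le hca)⟩),
          inv_sqrt_eq_rpow hc.le, inv_sqrt_eq_rpow (hc.le.trans hca)]
        norm_num
        ring
    _ ≤ 2 / √c := by
        have : 0 ≤ (√a)⁻¹ := by positivity
        rw [div_eq_mul_inv]; linarith

lemma integral_sqrtWeight_tail_le_inv (hc : 0 < c) (ha : 1 ≤ a) :
    ∫ w in (1 : ℝ)..a, sqrtWeight c w ≤ 1 / c := by
  calc ∫ w in (1 : ℝ)..a, sqrtWeight c w ≤ ∫ w in (1 : ℝ)..a, exp (-w) / c :=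
        integral_mono_on ha (intervalIntegrable_sqrtWeight (y := a) hc zero_le_one (by linarith))
          (Continuous.intervalIntegrable (by fun_prop) 1 a)
          fun w hw => sqrtWeight_le_exp_div hc hw.1
    _ = (exp (-1) - exp (-a)) / c := by
        rw [intervalIntegral.integral_div, integral_comp_neg exp, integral_exp]
    _ ≤ 1 / c := by
        gcongr
        linarith [exp_le_one_iff.mpr (by norm_num : (-1 : ℝ) ≤ 0), exp_pos (-a)]

lemma integral_sqrtWeight_le (hc : 0 < c) (hca : c ≤ a) :
    ∫ w in (0 : ℝ)..a, sqrtWeight c w ≤ 6 / √(c * (1 + c)) := by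
  have hs : 0 < √(c * (1 + c)) := sqrt_pos.mpr (by positivity)
  have hsc : 0 < √c := sqrt_pos.mpr hc
  rcases le_or_gt c 1 with hc1 | hc1
  · have hsplit := integral_add_adjacent_intervals
      (intervalIntegrable_sqrtWeight hc le_rfl hc.le)
      (intervalIntegrable_sqrtWeight hc hc.le (hc.le.trans hca))
    have h0 := integral_sqrtWeight_le_sqrt hc hc.le
    have h1 := integral_sqrtWeight_tail_le_inv_sqrt hc hca
    have hcc : √c * √c = c := mul_self_sqrt hc.le
    have hbound : √(c * (1 + c)) ≤ 3 / 2 * √c := by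
      rw [sqrt_le_left (by positivity)]
      nlinarith
    have : 2 * √c / c + 2 / √c ≤ 6 / √(c * (1 + c)) := by
      have hsimp : 2 * √c / c = 2 / √c := by
        rw [div_eq_div_iff hc.ne' hsc.ne', mul_assoc, hcc]
      rw [hsimp, ← add_div, div_le_div_iff₀ hsc hs]
      nlinarith
    linarith
  · have hsplit := integral_add_adjacent_intervals
      (intervalIntegrable_sqrtWeight hc le_rfl zero_le_one)
      (intervalIntegrable_sqrtWeight (y := a) hc zero_le_one (by linarith))
    have h0 := integral_sqrtWeight_le_sqrt hc zero_le_one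
    have h1 := integral_sqrtWeight_tail_le_inv hc (by linarith : (1 : ℝ) ≤ a)
    have hbound : √(c * (1 + c)) ≤ 2 * c := by
      rw [sqrt_le_left (by positivity)]
      nlinarith
    have : 2 * √1 / c + 1 / c ≤ 6 / √(c * (1 + c)) := by
      rw [sqrt_one, ← add_div, div_le_div_iff₀ hc hs]
      nlinarith
    linarith

lemma one_div_le_integral_sqrtWeight (hc : 0 < c) (hca : c ≤ a) :
    1 / (3 * √(c * (1 + c))) ≤ ∫ w in (0 : ℝ)..a, sqrtWeight c w := by
  set m := min c 1
  have hm : 0 < m := lt_min hc one_pos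
  have hs : 0 < √(c * (1 + c)) := sqrt_pos.mpr (by positivity)
  have hcm : c ≤ √m * √(c * (1 + c)) := by
    rw [← sqrt_mul hm.le, le_sqrt hc.le (by positivity)]
    have : c ≤ m * (1 + c) := by
      rw [min_mul_of_nonneg _ _ (by positivity)]
      exact le_min (by nlinarith) (by linarith)
    nlinarith
  calc 1 / (3 * √(c * (1 + c))) ≤ √m / (3 * c) := by
        rw [div_le_div_iff₀ (by positivity) (by positivity)]; nlinarith
    _ ≤ ∫ w in (0 : ℝ)..m, sqrtWeight c w :=
        sqrt_div_le_integral_sqrtWeight hc hm.le (min_le_right _ _) (min_le_left _ _)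
    _ ≤ ∫ w in (0 : ℝ)..a, sqrtWeight c w :=
        integral_mono_interval le_rfl hm.le ((min_le_left _ _).trans hca)
          (ae_restrict_of_forall_mem measurableSet_Ioc fun w hw => sqrtWeight_nonneg hc hw.1.le)
          (intervalIntegrable_sqrtWeight hc le_rfl (hc.le.trans hca))

lemma rpow_three_halves_mul_sqrtWeight (hc : 0 < c) (hw : 0 ≤ w) :
    w ^ (3 / 2 : ℝ) * sqrtWeight c w = w / (w + c) * exp (-w) := by
  rcases hw.eq_or_lt with rfl | hw
  · simp
  have hs := sqrt_pos.mpr hw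
  rw [rpow_three_halves_eq hw.le]
  unfold sqrtWeight
  field_simp

lemma intervalIntegrable_add_rpow_mul_sqrtWeight (hc : 0 < c) (ha : 0 ≤ a) :
    IntervalIntegrable (fun w => (w + b) ^ (3 / 2 : ℝ) * sqrtWeight c w) volume 0 a :=
  (intervalIntegrable_sqrtWeight hc le_rfl ha).continuousOn_mul
    ((continuous_rpow_const (by norm_num)).comp (continuous_add_const b)).continuousOn

lemma integral_rpow_mul_sqrtWeight_le_min (hc : 0 < c) (ha : 0 ≤ a) :
    ∫ w in (0 : ℝ)..a, w ^ (3 / 2 : ℝ) * sqrtWeight c w ≤ min 1 a := by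
  calc ∫ w in (0 : ℝ)..a, w ^ (3 / 2 : ℝ) * sqrtWeight c w
      ≤ ∫ w in (0 : ℝ)..a, exp (-w) := by
        refine integral_mono_on ha
          (by simpa using intervalIntegrable_add_rpow_mul_sqrtWeight (b := 0) hc ha)
          (Continuous.intervalIntegrable (by fun_prop) 0 a) fun w hw => ?_
        rw [rpow_three_halves_mul_sqrtWeight hc hw.1]
        have : w / (w + c) ≤ 1 := div_le_one_of_le₀ (by linarith) (by linarith [hw.1])
        nlinarith [exp_pos (-w)]
    _ = 1 - exp (-a) := by
        rw [integral_comp_neg exp, integral_exp, neg_zero, exp_zero]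
    _ ≤ min 1 a := le_min (by linarith [exp_pos (-a)]) (by linarith [add_one_le_exp (-a)])

lemma div_le_integral_rpow_mul_sqrtWeight (hc : 0 < c) (hca : c ≤ a) (ha1 : a ≤ 1) :
    a / 18 ≤ ∫ w in (0 : ℝ)..a, w ^ (3 / 2 : ℝ) * sqrtWeight c w := by
  have ha : 0 ≤ a := hc.le.trans hca
  have hint := by simpa using intervalIntegrable_add_rpow_mul_sqrtWeight (b := 0) hc ha
  calc a / 18 = ∫ _ in a / 2..a, (1 / 9 : ℝ) := by
        rw [intervalIntegral.integral_const, smul_eq_mul]; ring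
    _ ≤ ∫ w in a / 2..a, w ^ (3 / 2 : ℝ) * sqrtWeight c w := by
        refine integral_mono_on (by linarith) intervalIntegrable_const
          (hint.mono_set (by
            rw [uIcc_of_le (by linarith), uIcc_of_le ha]
            exact Icc_subset_Icc (by linarith) le_rfl)) fun w hw => ?_
        have hw0 : 0 < w := by linarith [hw.1]
        rw [rpow_three_halves_mul_sqrtWeight hc hw0.le]
        have hfrac : 1 / 3 ≤ w / (w + c) := by
          rw [le_div_iff₀ (by linarith)]; linarith [hw.1, hw.2]
        have hexp := one_third_le_exp_neg (by linarith [hw.2] : w ≤ 1)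
        nlinarith
    _ ≤ ∫ w in (0 : ℝ)..a, w ^ (3 / 2 : ℝ) * sqrtWeight c w :=
        integral_mono_interval (by linarith) (by linarith) le_rfl
          (ae_restrict_of_forall_mem measurableSet_Ioc fun w hw =>
            mul_nonneg (rpow_nonneg hw.1.le _) (sqrtWeight_nonneg hc hw.1.le)) hint

lemma add_rpow_three_halves_le (hx : 0 ≤ x) (hy : 0 ≤ y) :
    (x + y) ^ (3 / 2 : ℝ) ≤ 3 / 2 * (x ^ (3 / 2 : ℝ) + y ^ (3 / 2 : ℝ)) := by
  have h := NNReal.rpow_add_le_mul_rpow_add_rpow ⟨x, hx⟩ ⟨y, hy⟩ (p := 3 / 2) (by norm_num)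
  have h2 : (2 : ℝ) ^ (3 / 2 - 1 : ℝ) ≤ 3 / 2 := by
    rw [show (3 / 2 - 1 : ℝ) = 1 / 2 by norm_num, ← sqrt_eq_rpow, sqrt_le_left (by norm_num)]
    norm_num
  have h' : (x + y) ^ (3 / 2 : ℝ) ≤
      (2 : ℝ) ^ (3 / 2 - 1 : ℝ) * (x ^ (3 / 2 : ℝ) + y ^ (3 / 2 : ℝ)) := by
    exact_mod_cast h
  exact h'.trans (by gcongr)

lemma sqrt_mul_one_add_le (hK : 1 ≤ K) (hc : 0 ≤ c) (hcb : c ≤ b) (hKb : 1 ≤ K * b) :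
    √(c * (1 + c)) ≤ 2 * K * b ^ (3 / 2 : ℝ) := by
  have hb : 0 < b := by nlinarith
  rw [sqrt_le_left (by positivity), mul_pow, ← rpow_natCast (b ^ _), ← rpow_mul hb.le]
  norm_num
  have h1 : 1 ≤ (K * b) ^ 2 := by nlinarith
  have h2 : b ≤ (K * b) ^ 2 := by nlinarith
  nlinarith [mul_le_mul hcb hcb hc hb.le, mul_le_mul_of_nonneg_left h1 hb.le,
    mul_le_mul_of_nonneg_left h2 hb.le]

lemma integral_add_rpow_mul_sqrtWeight_le (hc : 0 < c) (hca : c ≤ a) (hb : 0 ≤ b) :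
    ∫ w in (0 : ℝ)..a, (w + b) ^ (3 / 2 : ℝ) * sqrtWeight c w ≤
      9 * (min 1 a + b ^ (3 / 2 : ℝ) / √(c * (1 + c))) := by
  have ha : 0 ≤ a := hc.le.trans hca
  have hρ := intervalIntegrable_sqrtWeight hc le_rfl ha
  have hA := intervalIntegrable_add_rpow_mul_sqrtWeight (b := 0) hc ha
  simp only [add_zero] at hA
  calc ∫ w in (0 : ℝ)..a, (w + b) ^ (3 / 2 : ℝ) * sqrtWeight c w
      ≤ ∫ w in (0 : ℝ)..a,
          3 / 2 * (w ^ (3 / 2 : ℝ) * sqrtWeight c w + b ^ (3 / 2 : ℝ) * sqrtWeight c w) :=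
        integral_mono_on ha (intervalIntegrable_add_rpow_mul_sqrtWeight hc ha)
          ((hA.add (hρ.const_mul _)).const_mul _) fun w hw => by
            rw [← add_mul, ← mul_assoc]
            exact mul_le_mul_of_nonneg_right (add_rpow_three_halves_le hw.1 hb)
              (sqrtWeight_nonneg hc hw.1)
    _ = 3 / 2 * ((∫ w in (0 : ℝ)..a, w ^ (3 / 2 : ℝ) * sqrtWeight c w) +
          b ^ (3 / 2 : ℝ) * ∫ w in (0 : ℝ)..a, sqrtWeight c w) := by
        rw [intervalIntegral.integral_const_mul, integral_add hA (hρ.const_mul _),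
          intervalIntegral.integral_const_mul]
    _ ≤ 3 / 2 * (min 1 a + b ^ (3 / 2 : ℝ) * (6 / √(c * (1 + c)))) := by
        gcongr
        · exact integral_rpow_mul_sqrtWeight_le_min hc ha
        · exact integral_sqrtWeight_le hc hca
    _ ≤ 9 * (min 1 a + b ^ (3 / 2 : ℝ) / √(c * (1 + c))) := by
        have : 0 ≤ min 1 a := le_min zero_le_one ha
        have : 0 ≤ b ^ (3 / 2 : ℝ) / √(c * (1 + c)) := by positivity
        rw [mul_div_assoc', mul_comm _ (6 : ℝ), mul_div_assoc]
        linarith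

lemma le_integral_add_rpow_mul_sqrtWeight (hK : 1 ≤ K) (hc : 0 < c) (hcb : c ≤ b)
    (hca : c ≤ a) (hKa : 1 ≤ a → a ≤ K * b) :
    1 / (36 * K) * (min 1 a + b ^ (3 / 2 : ℝ) / √(c * (1 + c))) ≤
      ∫ w in (0 : ℝ)..a, (w + b) ^ (3 / 2 : ℝ) * sqrtWeight c w := by
  have ha : 0 ≤ a := hc.le.trans hca
  have hb : 0 ≤ b := hc.le.trans hcb
  have hs : 0 < √(c * (1 + c)) := sqrt_pos.mpr (by positivity)
  have hρ := intervalIntegrable_sqrtWeight hc le_rfl ha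
  have hI := intervalIntegrable_add_rpow_mul_sqrtWeight (b := b) hc ha
  set I := ∫ w in (0 : ℝ)..a, (w + b) ^ (3 / 2 : ℝ) * sqrtWeight c w
  set T := b ^ (3 / 2 : ℝ) / √(c * (1 + c))
  have hT : 0 ≤ T := by positivity
  have hTI : T / 3 ≤ I :=
    calc T / 3 = b ^ (3 / 2 : ℝ) * (1 / (3 * √(c * (1 + c)))) := by ring
      _ ≤ b ^ (3 / 2 : ℝ) * ∫ w in (0 : ℝ)..a, sqrtWeight c w := by
          gcongr; exact one_div_le_integral_sqrtWeight hc hca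
      _ ≤ I := by
          rw [← intervalIntegral.integral_const_mul]
          exact integral_mono_on ha (hρ.const_mul _) hI fun w hw =>
            mul_le_mul_of_nonneg_right (rpow_le_rpow hb (by linarith [hw.1]) (by norm_num))
              (sqrtWeight_nonneg hc hw.1)
  rcases le_or_gt a 1 with ha1 | ha1
  · have hAI : a / 18 ≤ I := by
      refine (div_le_integral_rpow_mul_sqrtWeight hc hca ha1).trans
        (integral_mono_on ha
          (by simpa using intervalIntegrable_add_rpow_mul_sqrtWeight (b := 0) hc ha) hI
          fun w hw => mul_le_mul_of_nonneg_right (rpow_le_rpow hw.1 (by linarith) (by norm_num))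
            (sqrtWeight_nonneg hc hw.1))
    rw [min_eq_right ha1]
    calc 1 / (36 * K) * (a + T) ≤ 1 / 36 * (a + T) := by gcongr; linarith
      _ ≤ I := by linarith
  · have hKT : 1 ≤ 2 * K * T := by
      rw [← mul_div_assoc, le_div_iff₀ hs, one_mul]
      exact sqrt_mul_one_add_le hK hc.le hcb (by linarith [hKa ha1.le])
    rw [min_eq_left ha1.le]
    calc 1 / (36 * K) * (1 + T) ≤ 1 / (36 * K) * (3 * K * T) := by gcongr; nlinarith
      _ = T / 12 := by field_simp; ring
      _ ≤ I := by linarith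

lemma integral_eq_integral_add_rpow_mul_sqrtWeight :
    ∫ w in (0 : ℝ)..a, ((w + b) ^ (3 / 2 : ℝ) / (√w * (w + c))) * exp (-w) =
      ∫ w in (0 : ℝ)..a, (w + b) ^ (3 / 2 : ℝ) * sqrtWeight c w := by
  congr 1 with w
  unfold sqrtWeight
  ring

end

theorem stmt3 (K : ℝ) (hK : 1 ≤ K) :
    ∃ c₁ c₂ : ℝ, 0 < c₁ ∧ 0 < c₂ ∧
      ∀ a b c : ℝ, 0 < c → c < b → b < a → (1 ≤ a → a ≤ K * b) →
        c₁ * (min 1 a + b ^ ((3:ℝ)/2) / Real.sqrt (c * (1 + c))) ≤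
          (∫ w in (0:ℝ)..a, ((w + b) ^ ((3:ℝ)/2) / (Real.sqrt w * (w + c))) * Real.exp (-w)) ∧
        (∫ w in (0:ℝ)..a, ((w + b) ^ ((3:ℝ)/2) / (Real.sqrt w * (w + c))) * Real.exp (-w)) ≤
          c₂ * (min 1 a + b ^ ((3:ℝ)/2) / Real.sqrt (c * (1 + c))) := by
  refine ⟨1 / (36 * K), 9, by positivity, by norm_num, fun a b c hc hcb hba hKa => ?_⟩
  have hca : c ≤ a := (hcb.trans hba).le
  rw [integral_eq_integral_add_rpow_mul_sqrtWeight]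
  exact ⟨le_integral_add_rpow_mul_sqrtWeight hK hc hcb.le hca hKa,
    integral_add_rpow_mul_sqrtWeight_le hc hca (hc.trans hcb).le⟩
end

section
/- For all real μ > 0 and real A, ∫_0^∞ t^{-1/2}·exp(-A²/(2t) - μ²t/2) dt = (√(2π)/μ)·exp(-μ·|A|). -/
/-!
Substituting `t = s²` reduces the integral to `2 ∫₀^∞ exp (-c²/s² - d²s²) ds` with `c² = A²/2`,
`d² = μ²/2`. For `c > 0` this is the Cauchy–Schlömilch trick: the involution `s ↦ (c/d)/s` leaves
`h s = exp (-c²/s² - d²s²)` invariant, so `∫ h = ∫ (c/d)/s² · h s`; adding the two and completing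
the square, `(d + c/s²) h s = e^{-2cd} (d + c/s²) exp (-(ds - c/s)²)`, turns `2d ∫ h` into
`e^{-2cd}` times the Gaussian integral over the image `ℝ` of `s ↦ ds - c/s`. For `c = 0` it is the
half Gaussian integral.
-/

open Real MeasureTheory Set

theorem integrableOn_exp_neg_div_sq_sub_mul_sq (c : ℝ) {d : ℝ} (hd : 0 < d) :
    IntegrableOn (fun s : ℝ => exp (-c ^ 2 / s ^ 2 - d ^ 2 * s ^ 2)) (Ioi 0) := by
  refine (integrable_exp_neg_mul_sq (b := d ^ 2) (by positivity)).integrableOn.mono'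
    (by fun_prop : Measurable _).aestronglyMeasurable (ae_of_all _ fun s => ?_)
  have : 0 ≤ c ^ 2 / s ^ 2 := by positivity
  rw [norm_of_nonneg (exp_pos _).le, neg_div, neg_mul]
  exact exp_le_exp.mpr (by linarith)

theorem bijOn_div_Ioi {k : ℝ} (hk : 0 < k) : BijOn (fun s : ℝ => k / s) (Ioi 0) (Ioi 0) :=
  have hinv : InvOn (fun s : ℝ => k / s) (fun s => k / s) (Ioi 0) (Ioi 0) :=
    ⟨fun _ _ => div_div_cancel₀ hk.ne', fun _ _ => div_div_cancel₀ hk.ne'⟩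
  hinv.bijOn (fun _ hs => div_pos hk hs) (fun _ hs => div_pos hk hs)

theorem bijOn_mul_sub_div_Ioi_univ {c d : ℝ} (hc : 0 < c) (hd : 0 < d) :
    BijOn (fun s : ℝ => d * s - c / s) (Ioi 0) univ := by
  have hroot_pos (u : ℝ) : 0 < u + √(u ^ 2 + 4 * c * d) := by
    have := sq_sqrt (by positivity : 0 ≤ u ^ 2 + 4 * c * d)
    nlinarith [sqrt_nonneg (u ^ 2 + 4 * c * d), mul_pos hc hd]
  refine InvOn.bijOn (f' := fun u => (u + √(u ^ 2 + 4 * c * d)) / (2 * d))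
    ⟨fun s (hs : 0 < s) => ?_, fun u _ => ?_⟩
    (mapsTo_univ _ _) (fun u _ => div_pos (hroot_pos u) (by positivity))
  · dsimp only
    rw [show (d * s - c / s) ^ 2 + 4 * c * d = (d * s + c / s) ^ 2 by field_simp; ring,
      sqrt_sq (by positivity)]
    field_simp
    ring
  · have hr := sq_sqrt (by positivity : 0 ≤ u ^ 2 + 4 * c * d)
    have := (hroot_pos u).ne'
    set r := √(u ^ 2 + 4 * c * d)
    show d * ((u + r) / (2 * d)) - c / ((u + r) / (2 * d)) = u
    field_simp
    linear_combination hr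

theorem integral_exp_neg_div_sq_sub_mul_sq_of_pos {c d : ℝ} (hc : 0 < c) (hd : 0 < d) :
    ∫ s in Ioi 0, exp (-c ^ 2 / s ^ 2 - d ^ 2 * s ^ 2) = √π / (2 * d) * exp (-(2 * c * d)) := by
  set h : ℝ → ℝ := fun s => exp (-c ^ 2 / s ^ 2 - d ^ 2 * s ^ 2) with h_def
  have hσ : BijOn (fun s : ℝ => c / d / s) (Ioi 0) (Ioi 0) := bijOn_div_Ioi (by positivity)
  have hσ' : ∀ s ∈ Ioi (0 : ℝ),
      HasDerivWithinAt (fun s => c / d / s) (c / d * -(s ^ 2)⁻¹) (Ioi 0) s := fun s hs =>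
    ((hasDerivAt_inv (ne_of_gt hs)).const_mul (c / d)).hasDerivWithinAt
  have hσ_smul : ∀ s ∈ Ioi (0 : ℝ),
      |c / d * -(s ^ 2)⁻¹| • h (c / d / s) = c / d / s ^ 2 * h s := by
    intro s (hs : 0 < s)
    rw [smul_eq_mul, abs_mul, abs_neg, abs_of_pos (by positivity), abs_of_pos (by positivity)]
    simp only [h_def]
    congr 2
    field_simp
    ring
  have h_int : IntegrableOn h (Ioi 0) := integrableOn_exp_neg_div_sq_sub_mul_sq c hd
  have h_mirror : ∫ s in Ioi 0, h s = ∫ s in Ioi 0, c / d / s ^ 2 * h s := by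
    conv_lhs => rw [← hσ.image_eq,
      integral_image_eq_integral_abs_deriv_smul measurableSet_Ioi hσ' hσ.injOn]
    exact setIntegral_congr_fun measurableSet_Ioi hσ_smul
  have h_mirror_int : IntegrableOn (fun s => c / d / s ^ 2 * h s) (Ioi 0) := by
    rw [← hσ.image_eq,
      integrableOn_image_iff_integrableOn_abs_deriv_smul measurableSet_Ioi hσ' hσ.injOn] at h_int
    exact h_int.congr_fun hσ_smul measurableSet_Ioi
  have hf := bijOn_mul_sub_div_Ioi_univ hc hd
  have hf' : ∀ s ∈ Ioi (0 : ℝ),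
      HasDerivWithinAt (fun s => d * s - c / s) (d + c / s ^ 2) (Ioi 0) s := fun s hs =>
    (((hasDerivAt_id s).const_mul d).sub ((hasDerivAt_inv (ne_of_gt hs)).const_mul c)
      ).hasDerivWithinAt.congr_deriv (by ring)
  have hf_smul : ∀ s ∈ Ioi (0 : ℝ), |d + c / s ^ 2| • exp (-(d * s - c / s) ^ 2) =
      exp (2 * c * d) * d * (h s + c / d / s ^ 2 * h s) := by
    intro s (hs : 0 < s)
    rw [smul_eq_mul, abs_of_pos (by positivity),
      show -(d * s - c / s) ^ 2 = 2 * c * d + (-c ^ 2 / s ^ 2 - d ^ 2 * s ^ 2) by field_simp; ring,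
      exp_add]
    simp only [h_def]
    field_simp
  have h_gauss : √π = ∫ u, exp (-u ^ 2) := by simpa using (integral_gaussian 1).symm
  rw [← setIntegral_univ, ← hf.image_eq,
    integral_image_eq_integral_abs_deriv_smul measurableSet_Ioi hf' hf.injOn,
    setIntegral_congr_fun measurableSet_Ioi hf_smul, integral_const_mul,
    integral_add h_int h_mirror_int, ← h_mirror] at h_gauss
  rw [h_gauss, exp_neg]
  field_simp
  ring

theorem integral_exp_neg_div_sq_sub_mul_sq {c d : ℝ} (hc : 0 ≤ c) (hd : 0 < d) :
    ∫ s in Ioi 0, exp (-c ^ 2 / s ^ 2 - d ^ 2 * s ^ 2) = √π / (2 * d) * exp (-(2 * c * d)) := by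
  obtain rfl | hc := hc.eq_or_lt
  · have := integral_gaussian_Ioi (d ^ 2)
    rw [sqrt_div' _ (sq_nonneg d), sqrt_sq hd.le, div_div, mul_comm d] at this
    simpa [← neg_mul] using this
  · exact integral_exp_neg_div_sq_sub_mul_sq_of_pos hc hd

theorem integral_rpow_neg_half_mul_exp_neg_div_sub_mul {a b : ℝ} (ha : 0 ≤ a) (hb : 0 < b) :
    ∫ t in Ioi 0, t ^ (-(1 : ℝ) / 2) * exp (-a / t - b * t) = √(π / b) * exp (-(2 * √(a * b))) := by
  rw [← integral_comp_rpow_Ioi_of_pos (g := fun t => t ^ (-(1 : ℝ) / 2) * exp (-a / t - b * t))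
    two_pos]
  calc ∫ s in Ioi 0, ((2 : ℝ) * s ^ ((2 : ℝ) - 1)) • ((s ^ (2 : ℝ)) ^ (-(1 : ℝ) / 2) *
          exp (-a / s ^ (2 : ℝ) - b * s ^ (2 : ℝ)))
      = ∫ s in Ioi 0, 2 * exp (-√a ^ 2 / s ^ 2 - √b ^ 2 * s ^ 2) := by
        refine setIntegral_congr_fun measurableSet_Ioi fun s (hs : 0 < s) => ?_
        rw [← rpow_mul hs.le, show (2 : ℝ) * (-1 / 2) = -1 by norm_num, rpow_neg_one,
          show (2 : ℝ) - 1 = 1 by norm_num, rpow_one, rpow_two, sq_sqrt ha, sq_sqrt hb.le,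
          smul_eq_mul]
        field_simp
    _ = √(π / b) * exp (-(2 * √(a * b))) := by
        rw [integral_const_mul, integral_exp_neg_div_sq_sub_mul_sq (sqrt_nonneg a) (sqrt_pos.2 hb),
          sqrt_div' _ hb.le, sqrt_mul ha]
        field_simp

theorem stmt5 (μ A : ℝ) (hμ : 0 < μ) :
    ∫ t in Set.Ioi (0:ℝ), t ^ (-(1:ℝ)/2) * Real.exp (-A ^ 2 / (2 * t) - μ ^ 2 * t / 2) =
      (Real.sqrt (2 * π) / μ) * Real.exp (-μ * |A|) := by
  have key := integral_rpow_neg_half_mul_exp_neg_div_sub_mul (a := A ^ 2 / 2) (b := μ ^ 2 / 2)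
    (by positivity) (by positivity)
  have h_sqrt_div : √(π / (μ ^ 2 / 2)) = √(2 * π) / μ := by
    rw [show π / (μ ^ 2 / 2) = 2 * π / μ ^ 2 by field_simp, sqrt_div' _ (sq_nonneg μ),
      sqrt_sq hμ.le]
  have h_sqrt_mul : √(A ^ 2 / 2 * (μ ^ 2 / 2)) = μ * |A| / 2 := by
    rw [show A ^ 2 / 2 * (μ ^ 2 / 2) = (μ * |A| / 2) ^ 2 by rw [div_pow, mul_pow, sq_abs]; ring,
      sqrt_sq (by positivity)]
  rw [h_sqrt_div, h_sqrt_mul] at key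
  convert key using 3
  · ring_nf
  · ring
end

section
/- For all real t with 0 < t and all x > 0, the function g(x,t) = 1 - x - t + (t/x)·(1 - e^{-2x/t}) - (1+x+t)·e^{-2x/t} satisfies g(x,t) ≤ 2 - 2t; in particular g(x,t) < 2 for t > 0. -/
/-! With `s = 2x/t` and `E = exp (-s)`, both the bound `(t/x)(1 - E) ≤ 1 + E` on the middle
term and the final comparison reduce to `t (1 - E) ≤ x (1 + E)`, i.e. to `tanh (s/2) ≤ s/2`
in the form `2 (1 - E) ≤ s (1 + E)`. The latter holds because `s + (s + 2) exp (-s)` is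
monotone, its derivative `1 - (1 + s) exp (-s)` being nonnegative by `1 + s ≤ exp s`. -/

open Real

lemma hasDerivAt_add_add_two_mul_exp_neg (u : ℝ) :
    HasDerivAt (fun s : ℝ => s + (s + 2) * exp (-s)) (1 - (1 + u) * exp (-u)) u := by
  have hexp : HasDerivAt (fun s : ℝ => exp (-s)) (-exp (-u)) u := by
    simpa using (hasDerivAt_neg u).exp
  exact ((hasDerivAt_id' u).add (((hasDerivAt_id' u).add_const 2).mul hexp)).congr_deriv (by ring)

lemma one_add_mul_exp_neg_le_one (u : ℝ) : (1 + u) * exp (-u) ≤ 1 := by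
  calc (1 + u) * exp (-u) ≤ exp u * exp (-u) := by
        gcongr
        linarith [add_one_le_exp u]
    _ = 1 := by rw [← exp_add, add_neg_cancel, exp_zero]

lemma monotone_add_add_two_mul_exp_neg : Monotone (fun s : ℝ => s + (s + 2) * exp (-s)) :=
  monotone_of_hasDerivAt_nonneg hasDerivAt_add_add_two_mul_exp_neg fun u =>
    sub_nonneg.mpr (one_add_mul_exp_neg_le_one u)

lemma two_mul_one_sub_exp_neg_le {s : ℝ} (hs : 0 ≤ s) :
    2 * (1 - exp (-s)) ≤ s * (1 + exp (-s)) := by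
  have h := monotone_add_add_two_mul_exp_neg hs
  simp only [neg_zero, exp_zero] at h
  linarith

lemma mul_one_sub_exp_le_mul_one_add_exp {t x : ℝ} (ht : 0 < t) (hx : 0 ≤ x) :
    t * (1 - exp (-2 * x / t)) ≤ x * (1 + exp (-2 * x / t)) := by
  have h := two_mul_one_sub_exp_neg_le (div_nonneg (mul_nonneg zero_le_two hx) ht.le)
  rw [← neg_div, ← neg_mul] at h
  have h' := mul_le_mul_of_nonneg_left h ht.le
  rw [show t * (2 * x / t * (1 + exp (-2 * x / t))) = 2 * (x * (1 + exp (-2 * x / t))) by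
    field_simp] at h'
  linarith

theorem stmt15 (t x : ℝ) (ht : 0 < t) (hx : 0 < x) :
    1 - x - t + (t / x) * (1 - Real.exp (-2 * x / t)) - (1 + x + t) * Real.exp (-2 * x / t)
      ≤ 2 - 2 * t := by
  have key := mul_one_sub_exp_le_mul_one_add_exp ht hx.le
  have middle : t / x * (1 - exp (-2 * x / t)) ≤ 1 + exp (-2 * x / t) := by
    rw [div_mul_eq_mul_div, div_le_iff₀ hx]
    linarith
  linarith
end

section
/- For every real t ≥ 1/4, the series Σ_{k=2}^∞ k²·e^{-(k²-1)·π²·t/2} converges and its sum is at most 1/5. -/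
open Real

theorem stmt16 (t : ℝ) (ht : 1/4 ≤ t) :
    Summable (fun k : ℕ => ((k + 2 : ℝ)) ^ 2 * Real.exp (-(((k + 2 : ℝ)) ^ 2 - 1) * π ^ 2 * t / 2)) ∧
    ∑' k : ℕ, ((k + 2 : ℝ)) ^ 2 * Real.exp (-(((k + 2 : ℝ)) ^ 2 - 1) * π ^ 2 * t / 2) ≤ 1/5 := by
  have hπ : (3.14 : ℝ) ≤ π := by linarith [Real.pi_gt_d6]
  have hπ2 : (9.8 : ℝ) ≤ π ^ 2 := by nlinarith
  set r : ℝ := Real.exp (-3 * π ^ 2 / 8) with hr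
  have hr0 : 0 < r := Real.exp_pos _
  have hr1 : r < 1 := by
    rw [hr, Real.exp_lt_one_iff]; nlinarith
  have key : ∀ k : ℕ, ((k + 2 : ℝ)) ^ 2 * Real.exp (-(((k + 2 : ℝ)) ^ 2 - 1) * π ^ 2 * t / 2)
      ≤ 4 * r * r ^ k := by
    intro k
    have hk : (0:ℝ) ≤ (k:ℝ) := Nat.cast_nonneg k
    have hB : (0:ℝ) ≤ ((k + 2 : ℝ)) ^ 2 - 1 := by nlinarith
    have h1 : Real.exp (-(((k + 2 : ℝ)) ^ 2 - 1) * π ^ 2 * t / 2)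
        ≤ Real.exp (-(((k + 2 : ℝ)) ^ 2 - 1) * π ^ 2 / 8) := by
      apply Real.exp_le_exp.2
      have hprod : (0:ℝ) ≤ (((k + 2 : ℝ)) ^ 2 - 1) * π ^ 2 * (t - 1/4) :=
        mul_nonneg (mul_nonneg hB (by positivity)) (by linarith)
      nlinarith
    have h2 : ((k + 2 : ℝ)) ^ 2 ≤ 4 * Real.exp (((k:ℝ) ^ 2 + k) * π ^ 2 / 8) := by
      have hx := Real.add_one_le_exp (((k:ℝ) ^ 2 + k) * π ^ 2 / 8)
      have hprod : (0:ℝ) ≤ ((k:ℝ) ^ 2 + k) * (π ^ 2 - 9.8) :=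
        mul_nonneg (by positivity) (by linarith)
      nlinarith
    calc ((k + 2 : ℝ)) ^ 2 * Real.exp (-(((k + 2 : ℝ)) ^ 2 - 1) * π ^ 2 * t / 2)
        ≤ ((k + 2 : ℝ)) ^ 2 * Real.exp (-(((k + 2 : ℝ)) ^ 2 - 1) * π ^ 2 / 8) :=
          mul_le_mul_of_nonneg_left h1 (by positivity)
      _ ≤ (4 * Real.exp (((k:ℝ) ^ 2 + k) * π ^ 2 / 8)) *
            Real.exp (-(((k + 2 : ℝ)) ^ 2 - 1) * π ^ 2 / 8) :=
          mul_le_mul_of_nonneg_right h2 (Real.exp_pos _).le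
      _ = 4 * r * r ^ k := by
          rw [hr, ← Real.exp_nat_mul, mul_assoc, ← Real.exp_add, mul_assoc, ← Real.exp_add]
          congr 2
          ring
  have hg : Summable (fun k : ℕ => 4 * r * r ^ k) :=
    (summable_geometric_of_lt_one hr0.le hr1).mul_left _
  have hf0 : ∀ k : ℕ, 0 ≤ ((k + 2 : ℝ)) ^ 2 * Real.exp (-(((k + 2 : ℝ)) ^ 2 - 1) * π ^ 2 * t / 2) := by
    intro k; positivity
  have hf : Summable (fun k : ℕ => ((k + 2 : ℝ)) ^ 2 * Real.exp (-(((k + 2 : ℝ)) ^ 2 - 1) * π ^ 2 * t / 2)) :=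
    Summable.of_nonneg_of_le hf0 key hg
  refine ⟨hf, ?_⟩
  have hle : ∑' k : ℕ, ((k + 2 : ℝ)) ^ 2 * Real.exp (-(((k + 2 : ℝ)) ^ 2 - 1) * π ^ 2 * t / 2)
      ≤ ∑' k : ℕ, 4 * r * r ^ k := Summable.tsum_le_tsum key hf hg
  have hgs : ∑' k : ℕ, 4 * r * r ^ k = 4 * r * (1 - r)⁻¹ := by
    rw [tsum_mul_left, tsum_geometric_of_lt_one hr0.le hr1]
  -- now show 4*r*(1-r)⁻¹ ≤ 1/5, using r ≤ 1/21
  have he : (21:ℝ) ≤ Real.exp (3 * π ^ 2 / 8) := by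
    have e1 : (2.718:ℝ) ≤ Real.exp 1 := by linarith [Real.exp_one_gt_d9]
    have e3 : (19.6:ℝ) ≤ Real.exp 3 := by
      have h3 : Real.exp 3 = (Real.exp 1) ^ 3 := by
        rw [← Real.exp_nat_mul]; norm_num
      have := pow_le_pow_left₀ (by norm_num : (0:ℝ) ≤ 2.718) e1 3
      rw [h3]; nlinarith
    have e06 : (1.6:ℝ) ≤ Real.exp 0.6 := by linarith [Real.add_one_le_exp (0.6:ℝ)]
    have e36 : (21:ℝ) ≤ Real.exp 3.6 := by
      have hsum : Real.exp 3.6 = Real.exp 3 * Real.exp 0.6 := by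
        rw [← Real.exp_add]; norm_num
      nlinarith [Real.exp_pos (3:ℝ)]
    have hmono : Real.exp 3.6 ≤ Real.exp (3 * π ^ 2 / 8) := Real.exp_le_exp.2 (by linarith)
    linarith
  have hr21 : r ≤ 1/21 := by
    rw [hr]
    have : Real.exp (-3 * π ^ 2 / 8) = (Real.exp (3 * π ^ 2 / 8))⁻¹ := by
      rw [← Real.exp_neg]; ring_nf
    rw [this]
    rw [inv_le_comm₀ (by positivity) (by norm_num)]
    simpa using he
  have h1r : (20/21:ℝ) ≤ 1 - r := by linarith
  have hinv : (1 - r)⁻¹ ≤ 21/20 := by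
    have := inv_anti₀ (by norm_num : (0:ℝ) < 20/21) h1r
    simpa using this
  have hfin : 4 * r * (1 - r)⁻¹ ≤ 1/5 := by
    have h4r : 4 * r ≤ 4/21 := by linarith
    have hinv0 : (0:ℝ) ≤ (1 - r)⁻¹ := by positivity
    calc 4 * r * (1 - r)⁻¹ ≤ (4/21) * (21/20) :=
          mul_le_mul h4r hinv hinv0 (by norm_num)
      _ = 1/5 := by norm_num
  linarith [hle, hgs.le, hgs.ge]
end

section
/- For every real t ≥ 1/4 and every real x with 0 < x < 1, the series S(t,x) = Σ_{k=1}^∞ (-1)^{k+1}·k·sin(kπx)·e^{-k²π²t/2} converges and satisfies 0.8·sin(πx)·e^{-π²t/2} ≤ S(t,x) ≤ 1.2·sin(πx)·e^{-π²t/2}. -/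
/-!
The first term of the series is `sin (πx) e^{-π²t/2}`; the theorem says the tail is at most a
fifth of it. Since `|sin (nπx)| ≤ n sin (πx)`, `n² ≤ 4^(n-1)` and `n² ≥ 1 + 3(n-1)`, the `n`-th term
is at most `sin (πx) e^{-π²t/2} r^(n-1)` with `r = 4 e^{-3π²t/2} ≤ 1/6` for `t ≥ 1/4`, so the tail
is bounded by the geometric sum `r / (1 - r) ≤ 1/5` times the first term.
-/

open Real

lemma abs_sin_nat_mul_le (n : ℕ) (θ : ℝ) : |sin (n * θ)| ≤ n * |sin θ| := by
  induction n with
  | zero => simp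
  | succ n ih =>
    push_cast
    rw [add_mul, one_mul, sin_add]
    calc |sin (n * θ) * cos θ + cos (n * θ) * sin θ|
        ≤ |sin (n * θ)| * |cos θ| + |cos (n * θ)| * |sin θ| := by
          rw [← abs_mul, ← abs_mul]; exact abs_add_le _ _
      _ ≤ n * |sin θ| * 1 + 1 * |sin θ| := by
          gcongr <;> exact abs_cos_le_one _
      _ = (n + 1) * |sin θ| := by ring

lemma succ_sq_le_four_pow (k : ℕ) : ((k : ℝ) + 1) ^ 2 ≤ 4 ^ k := by
  have h : k + 1 ≤ 2 ^ k := k.lt_two_pow_self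
  calc ((k : ℝ) + 1) ^ 2 ≤ ((2 : ℝ) ^ k) ^ 2 := by gcongr; exact_mod_cast h
    _ = 4 ^ k := by rw [← pow_mul, mul_comm, pow_mul]; norm_num

lemma exp_neg_succ_sq_mul_le {c : ℝ} (hc : 0 ≤ c) (k : ℕ) :
    exp (-((k : ℝ) + 1) ^ 2 * c) ≤ exp (-c) * exp (-(3 * c)) ^ k := by
  rw [← exp_nat_mul, ← exp_add, exp_le_exp]
  have hk : (k : ℝ) ≤ (k : ℝ) ^ 2 := by exact_mod_cast Nat.le_self_pow two_ne_zero k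
  nlinarith

lemma summable_and_abs_tsum_sub_le_of_abs_le_geometric {f : ℕ → ℝ} {a r : ℝ}
    (hr₀ : 0 ≤ r) (hr₁ : r < 1) (hf : ∀ k, |f k| ≤ a * r ^ k) :
    Summable f ∧ |∑' k, f k - f 0| ≤ a * r / (1 - r) := by
  have hsum : Summable f :=
    .of_norm_bounded ((summable_geometric_of_lt_one hr₀ hr₁).mul_left a) hf
  refine ⟨hsum, ?_⟩
  have htail : HasSum (fun k ↦ a * r ^ (k + 1)) (a * r / (1 - r)) := by
    simpa only [pow_succ', ← mul_assoc, div_eq_mul_inv] using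
      (hasSum_geometric_of_lt_one hr₀ hr₁).mul_left (a * r)
  rw [hsum.tsum_eq_zero_add, add_sub_cancel_left]
  exact tsum_of_norm_bounded (f := fun k ↦ f (k + 1)) htail fun k ↦ hf (k + 1)

lemma four_mul_exp_neg_three_mul_le_one_sixth {t : ℝ} (ht : 1 / 4 ≤ t) :
    4 * exp (-(3 * (π ^ 2 * t / 2))) ≤ 1 / 6 := by
  have hπ : 27 / 8 ≤ 3 * (π ^ 2 * t / 2) := by nlinarith [pi_gt_three]
  have he : 2.718 ^ 3 ≤ exp 1 ^ 3 := by gcongr; linarith [exp_one_gt_d9]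
  have h24 : 24 ≤ exp (3 * (π ^ 2 * t / 2)) :=
    calc (24 : ℝ) ≤ 2.718 ^ 3 * (3 / 8 + 1) := by norm_num
      _ ≤ exp 1 ^ 3 * exp (3 / 8) := by gcongr; exact add_one_le_exp _
      _ = exp (27 / 8) := by rw [← exp_nat_mul, ← exp_add]; norm_num
      _ ≤ exp (3 * (π ^ 2 * t / 2)) := exp_le_exp.mpr hπ
  rw [exp_neg]
  linarith [inv_anti₀ (by norm_num) h24]

/-- The `(k + 1)`-st term of `S(t, x)`. -/
noncomputable def heatSeriesTerm (t x : ℝ) (k : ℕ) : ℝ :=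
  (-1 : ℝ) ^ ((k + 1) + 1) * (k + 1) * sin ((k + 1) * π * x) *
    exp (-((k + 1 : ℝ)) ^ 2 * π ^ 2 * t / 2)

lemma heatSeriesTerm_zero (t x : ℝ) :
    heatSeriesTerm t x 0 = sin (π * x) * exp (-π ^ 2 * t / 2) := by
  simp [heatSeriesTerm]

lemma abs_heatSeriesTerm_le {t : ℝ} (ht : 0 ≤ t) (x : ℝ) (k : ℕ) :
    |heatSeriesTerm t x k| ≤
      |sin (π * x)| * exp (-π ^ 2 * t / 2) * (4 * exp (-(3 * (π ^ 2 * t / 2)))) ^ k := by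
  have hsin := abs_sin_nat_mul_le (k + 1) (π * x)
  have hexp := exp_neg_succ_sq_mul_le (c := π ^ 2 * t / 2) (by positivity) k
  push_cast at hsin
  calc |heatSeriesTerm t x k|
      = ((k : ℝ) + 1) * |sin (((k : ℝ) + 1) * (π * x))| *
          exp (-((k : ℝ) + 1) ^ 2 * (π ^ 2 * t / 2)) := by
        simp only [heatSeriesTerm, abs_mul, abs_pow, abs_neg, abs_one, one_pow, one_mul, abs_exp]
        rw [abs_of_nonneg (by positivity : (0 : ℝ) ≤ k + 1)]
        ring_nf
    _ ≤ ((k : ℝ) + 1) * (((k : ℝ) + 1) * |sin (π * x)|) *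
          (exp (-(π ^ 2 * t / 2)) * exp (-(3 * (π ^ 2 * t / 2))) ^ k) := by gcongr
    _ = ((k : ℝ) + 1) ^ 2 * (|sin (π * x)| * exp (-(π ^ 2 * t / 2)) *
          exp (-(3 * (π ^ 2 * t / 2))) ^ k) := by ring
    _ ≤ 4 ^ k * (|sin (π * x)| * exp (-(π ^ 2 * t / 2)) *
          exp (-(3 * (π ^ 2 * t / 2))) ^ k) := by gcongr; exact succ_sq_le_four_pow k
    _ = |sin (π * x)| * exp (-π ^ 2 * t / 2) * (4 * exp (-(3 * (π ^ 2 * t / 2)))) ^ k := by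
        rw [mul_pow, show -π ^ 2 * t / 2 = -(π ^ 2 * t / 2) by ring]; ring

theorem stmt18 (t x : ℝ) (ht : 1/4 ≤ t) (hx0 : 0 < x) (hx1 : x < 1) :
    Summable (fun k : ℕ =>
      (-1 : ℝ) ^ ((k + 1) + 1) * (k + 1) * Real.sin ((k + 1) * π * x) *
        Real.exp (-((k + 1 : ℝ)) ^ 2 * π ^ 2 * t / 2)) ∧
    0.8 * Real.sin (π * x) * Real.exp (-π ^ 2 * t / 2) ≤
      (∑' k : ℕ, (-1 : ℝ) ^ ((k + 1) + 1) * (k + 1) * Real.sin ((k + 1) * π * x) *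
        Real.exp (-((k + 1 : ℝ)) ^ 2 * π ^ 2 * t / 2)) ∧
    (∑' k : ℕ, (-1 : ℝ) ^ ((k + 1) + 1) * (k + 1) * Real.sin ((k + 1) * π * x) *
        Real.exp (-((k + 1 : ℝ)) ^ 2 * π ^ 2 * t / 2)) ≤
      1.2 * Real.sin (π * x) * Real.exp (-π ^ 2 * t / 2) := by
  change Summable (heatSeriesTerm t x) ∧
    _ ≤ ∑' k, heatSeriesTerm t x k ∧ ∑' k, heatSeriesTerm t x k ≤ _
  have hr := four_mul_exp_neg_three_mul_le_one_sixth ht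
  set r := 4 * exp (-(3 * (π ^ 2 * t / 2)))
  have hr₀ : 0 ≤ r := by positivity
  have hs : 0 ≤ sin (π * x) :=
    sin_nonneg_of_nonneg_of_le_pi (by positivity) (by nlinarith [pi_pos])
  set a := sin (π * x) * exp (-π ^ 2 * t / 2)
  have ha : 0 ≤ a := by positivity
  obtain ⟨hsum, htail⟩ :=
    summable_and_abs_tsum_sub_le_of_abs_le_geometric hr₀ (hr.trans_lt (by norm_num)) fun k ↦
      (abs_heatSeriesTerm_le (ht.trans' (by norm_num)) x k).trans_eq (by rw [abs_of_nonneg hs])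
  have hgeom : a * r / (1 - r) ≤ 0.2 * a := by
    rw [div_le_iff₀ (by linarith)]
    nlinarith
  rw [heatSeriesTerm_zero] at htail
  obtain ⟨hlow, hupp⟩ := abs_le.mp (htail.trans hgeom)
  exact ⟨hsum, by linarith, by linarith⟩
end
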